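/- arXiv:1612.02034 — 11 statements merged into one kernel-verified Lean document; each statement's English description precedes it below -/
import Mathlib

section
/- Every weakly ε-modular set function is 2ε-modular. That is, if f is a set function over n items such that |f(S)+f(T)−f(S∪T)−f(S∩T)| ≤ ε for every two disjoint sets S,T ⊆ U, then |f(S)+f(T)−f(S∪T)−f(S∩T)| ≤ 2ε for every two (not necessarily disjoint) sets S,T ⊆ U. -/
open Finset

/-- `f` is ε-modular: the modularity equation holds up to ε for all pairs of sets. -/
def IsModular {n : ℕ} (f : Finset (Fin n) → ℝ) (ε : ℝ) : Prop :=
  ∀ S T : Finset (Fin n), |f S + f T - f (S ∪ T) - f (S ∩ T)| ≤ ε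

/-- `f` is weakly ε-modular: the modularity equation holds up to ε for disjoint pairs. -/
def IsWeaklyModular {n : ℕ} (f : Finset (Fin n) → ℝ) (ε : ℝ) : Prop :=
  ∀ S T : Finset (Fin n), Disjoint S T → |f S + f T - f (S ∪ T) - f (S ∩ T)| ≤ ε

/-- Every weakly ε-modular set function is 2ε-modular. -/
theorem weakly_modular_implies_two_eps_modular {n : ℕ} (f : Finset (Fin n) → ℝ) (ε : ℝ)
    (hf : IsWeaklyModular f ε) : IsModular f (2 * ε) := by
  intro S T
  have h1 := hf S (T \ S) disjoint_sdiff
  have h2 := hf (S ∩ T) (T \ S) (disjoint_sdiff.mono_left inter_subset_left)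
  rw [union_sdiff_self_eq_union] at h1
  have hu : (S ∩ T) ∪ (T \ S) = T := by
    ext x; simp; tauto
  rw [hu] at h2
  have hi1 : S ∩ (T \ S) = ∅ := by ext x; simp
  have hi2 : (S ∩ T) ∩ (T \ S) = ∅ := by ext x; simp; tauto
  rw [hi1] at h1
  rw [hi2] at h2
  rw [abs_le] at *
  constructor <;> [linarith [h1.1, h2.2]; linarith [h1.2, h2.1]]
end

section
/- The bound '4Δ' in the implication from Δ-linearity to 4Δ-modularity is tight, even for symmetric functions: the symmetric set function f over 4 items defined by f(S) = 0 if |S| ∈ {0,4}, f(S) = −1 if |S| ∈ {1,3}, and f(S) = +1 if |S| = 2, is 1-linear, yet there exist two sets S,T ⊆ U with |f(S)+f(T)−f(S∪T)−f(S∩T)| = 4; in particular f is not ε-modular for any ε < 4. -/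
open Finset

/-- `f` is linear: `f(S) = c₀ + ∑_{i ∈ S} cᵢ` for some constants. -/
def IsLinear {n : ℕ} (f : Finset (Fin n) → ℝ) : Prop :=
  ∃ (c₀ : ℝ) (c : Fin n → ℝ), ∀ S : Finset (Fin n), f S = c₀ + ∑ i ∈ S, c i

/-- `f` is Δ-linear: there is a linear function within additive distance Δ of `f`. -/
def IsCloseLinear {n : ℕ} (f : Finset (Fin n) → ℝ) (Δ : ℝ) : Prop :=
  ∃ g : Finset (Fin n) → ℝ, IsLinear g ∧ ∀ S : Finset (Fin n), |f S - g S| ≤ Δ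

/-- The symmetric function over 4 items that is 0 on sets of size 0 or 4, -1 on sets of
size 1 or 3, and +1 on sets of size 2. -/
noncomputable def f4 : Finset (Fin 4) → ℝ := fun S =>
  if S.card = 2 then 1 else if S.card = 1 ∨ S.card = 3 then -1 else 0

lemma f4_viol : ∃ S T : Finset (Fin 4), |f4 S + f4 T - f4 (S ∪ T) - f4 (S ∩ T)| = 4 := by
  refine ⟨{0, 1}, {1, 2}, ?_⟩
  have h1 : ({0, 1} : Finset (Fin 4)) ∪ {1, 2} = {0, 1, 2} := by decide
  have h2 : ({0, 1} : Finset (Fin 4)) ∩ {1, 2} = {1} := by decide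
  rw [h1, h2]
  have c1 : ({0, 1} : Finset (Fin 4)).card = 2 := by decide
  have c2 : ({1, 2} : Finset (Fin 4)).card = 2 := by decide
  have c3 : ({0, 1, 2} : Finset (Fin 4)).card = 3 := by decide
  have c4 : ({1} : Finset (Fin 4)).card = 1 := by decide
  simp [f4, c1, c2, c3, c4]
  norm_num

/-- The bound 4Δ is tight, even for symmetric functions: `f4` is symmetric and 1-linear,
yet the modularity equation is violated by exactly 4 for some pair of sets, so `f4` is not
ε-modular for any ε < 4. -/
theorem four_delta_tight :
    (∀ S T : Finset (Fin 4), S.card = T.card → f4 S = f4 T) ∧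
    IsCloseLinear f4 1 ∧
    (∃ S T : Finset (Fin 4), |f4 S + f4 T - f4 (S ∪ T) - f4 (S ∩ T)| = 4) ∧
    (∀ ε : ℝ, ε < 4 → ¬ IsModular f4 ε) := by
  refine ⟨fun S T h => by simp [f4, h], ?_, f4_viol, ?_⟩
  · refine ⟨fun _ => 0, ⟨0, fun _ => 0, by simp⟩, fun S => ?_⟩
    simp only [sub_zero, f4]
    split_ifs <;> simp
  · intro ε hε hmod
    obtain ⟨S, T, hST⟩ := f4_viol
    have := hmod S T
    linarith [hST ▸ this]
end

section
/- Every symmetric ε-modular set function is (ε/2)-linear. That is, if f is a set function over n items with f(S) = f(T) whenever |S| = |T|, and |f(S)+f(T)−f(S∪T)−f(S∩T)| ≤ ε for every two sets S,T ⊆ U, then there exists a linear set function g with |f(S)−g(S)| ≤ ε/2 for every set S ⊆ U. -/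
open Finset

private lemma card_Ival (n a b : ℕ) (hb : b ≤ n) :
    (Finset.univ.filter (fun i : Fin n => a ≤ (i : ℕ) ∧ (i : ℕ) < b)).card = b - a := by
  classical
  have h : (Finset.univ.filter (fun i : Fin n => a ≤ (i : ℕ) ∧ (i : ℕ) < b)) =
      (Finset.Ico a b).attachFin (fun m hm => lt_of_lt_of_le (Finset.mem_Ico.mp hm).2 hb) := by
    ext i
    simp [Finset.mem_attachFin, Finset.mem_Ico]
  rw [h, Finset.card_attachFin, Nat.card_Ico]

private lemma card_Iv0 (n b : ℕ) (hb : b ≤ n) :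
    (Finset.univ.filter (fun i : Fin n => (i : ℕ) < b)).card = b := by
  classical
  have h : (Finset.univ.filter (fun i : Fin n => (i : ℕ) < b)) =
      (Finset.univ.filter (fun i : Fin n => 0 ≤ (i : ℕ) ∧ (i : ℕ) < b)) := by
    ext i; simp
  rw [h, card_Ival n 0 b hb]
  omega

/-- Every symmetric ε-modular set function is (ε/2)-linear. -/
theorem symmetric_modular_implies_half_eps_linear {n : ℕ} (f : Finset (Fin n) → ℝ) (ε : ℝ)
    (hsymm : ∀ S T : Finset (Fin n), S.card = T.card → f S = f T)
    (hmod : IsModular f ε) : IsCloseLinear f (ε / 2) := by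
  classical
  have hε : 0 ≤ ε := by simpa using hmod ∅ ∅
  set h : ℕ → ℝ := fun k => f (Finset.univ.filter fun i : Fin n => (i : ℕ) < k) with hhdef
  have hfS : ∀ S : Finset (Fin n), f S = h S.card := by
    intro S
    have hle : S.card ≤ n := by
      simpa using Finset.card_le_univ S
    exact hsymm S _ (by rw [card_Iv0 n S.card hle])
  -- base lemma: equal-length block differences are within ε
  have base : ∀ x y g : ℕ, x ≤ y → y + g ≤ n →
      |(h (x + g) - h x) - (h (y + g) - h y)| ≤ ε := by
    intro x y g hxy hyn
    set S : Finset (Fin n) := Finset.univ.filter (fun i : Fin n => (i : ℕ) < y) with hS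
    set T : Finset (Fin n) := Finset.univ.filter
      (fun i : Fin n => (i : ℕ) < x ∨ (y ≤ (i : ℕ) ∧ (i : ℕ) < y + g)) with hT
    have hU : S ∪ T = Finset.univ.filter (fun i : Fin n => (i : ℕ) < y + g) := by
      ext i; simp [hS, hT]; omega
    have hI : S ∩ T = Finset.univ.filter (fun i : Fin n => (i : ℕ) < x) := by
      ext i; simp [hS, hT]; omega
    have hTsplit : T = (Finset.univ.filter fun i : Fin n => (i : ℕ) < x) ∪
        (Finset.univ.filter fun i : Fin n => y ≤ (i : ℕ) ∧ (i : ℕ) < y + g) := by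
      ext i; simp [hT]
    have hdisj : Disjoint (Finset.univ.filter fun i : Fin n => (i : ℕ) < x)
        (Finset.univ.filter fun i : Fin n => y ≤ (i : ℕ) ∧ (i : ℕ) < y + g) := by
      rw [Finset.disjoint_left]
      intro a ha hb
      simp only [Finset.mem_filter] at ha hb
      omega
    have hcT : T.card = x + g := by
      rw [hTsplit, Finset.card_union_of_disjoint hdisj, card_Iv0 n x (by omega),
        card_Ival n y (y + g) hyn]
      omega
    have hfT : f T = h (x + g) := by rw [hfS T, hcT]
    have hfSy : f S = h y := rfl
    have hfU : f (S ∪ T) = h (y + g) := by rw [hU]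
    have hfI : f (S ∩ T) = h x := by rw [hI]
    have hm := hmod S T
    rw [hfT, hfSy, hfU, hfI] at hm
    calc |(h (x + g) - h x) - (h (y + g) - h y)|
        = |h y + h (x + g) - h (y + g) - h x| := by ring_nf
      _ ≤ ε := hm
  have base' : ∀ x y g : ℕ, x + g ≤ n → y + g ≤ n →
      |(h (x + g) - h x) - (h (y + g) - h y)| ≤ ε := by
    intro x y g hx hy
    rcases le_total x y with hxy | hyx
    · exact base x y g hxy hy
    · rw [abs_sub_comm]; exact base y x g hyx hx
  -- key lemma by strong induction (Euclid-style)
  have key : ∀ N : ℕ, ∀ α β u v : ℕ, α + β ≤ N → 1 ≤ α → 1 ≤ β → u + α ≤ n → v + β ≤ n →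
      |(β : ℝ) * (h (u + α) - h u) - (α : ℝ) * (h (v + β) - h v)| ≤ ((α : ℝ) + (β : ℝ)) * ε := by
    intro N
    induction N with
    | zero => intro α β u v hs hα hβ _ _; exact absurd hs (by omega)
    | succ N ih =>
      intro α β u v hs hα hβ hun hvn
      rcases lt_trichotomy α β with hlt | heq | hgt
      · -- split B = [v, v+α) ∪ [v+α, v+β)
        have h1 : |(h (u + α) - h u) - (h (v + α) - h v)| ≤ ε :=
          base' u v α hun (by omega)
        have h2 := ih α (β - α) u (v + α) (by omega) hα (by omega) hun (by omega)
        rw [show v + α + (β - α) = v + β by omega] at h2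
        have hcast : ((β - α : ℕ) : ℝ) = (β : ℝ) - (α : ℝ) := by
          push_cast [Nat.cast_sub (le_of_lt hlt)]; ring
        rw [hcast] at h2
        have hαnn : (0 : ℝ) ≤ (α : ℝ) := by positivity
        have h1' : (α : ℝ) * |(h (u + α) - h u) - (h (v + α) - h v)| ≤ (α : ℝ) * ε :=
          mul_le_mul_of_nonneg_left h1 hαnn
        rw [← abs_of_nonneg hαnn, ← abs_mul, abs_of_nonneg hαnn] at h1'
        have habs := abs_add_le ((α : ℝ) * ((h (u + α) - h u) - (h (v + α) - h v)))
          (((β : ℝ) - (α : ℝ)) * (h (u + α) - h u) - (α : ℝ) * (h (v + β) - h (v + α)))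
        have hident : (β : ℝ) * (h (u + α) - h u) - (α : ℝ) * (h (v + β) - h v) =
            (α : ℝ) * ((h (u + α) - h u) - (h (v + α) - h v)) +
            (((β : ℝ) - (α : ℝ)) * (h (u + α) - h u) - (α : ℝ) * (h (v + β) - h (v + α))) := by
          ring
        rw [hident]
        have hfin : (α : ℝ) * ε + ((α : ℝ) + ((β : ℝ) - (α : ℝ))) * ε
            = ((α : ℝ) + (β : ℝ)) * ε := by ring
        calc |(α : ℝ) * ((h (u + α) - h u) - (h (v + α) - h v)) +
              (((β : ℝ) - (α : ℝ)) * (h (u + α) - h u) - (α : ℝ) * (h (v + β) - h (v + α)))|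
            ≤ |(α : ℝ) * ((h (u + α) - h u) - (h (v + α) - h v))| +
              |((β : ℝ) - (α : ℝ)) * (h (u + α) - h u) - (α : ℝ) * (h (v + β) - h (v + α))| :=
            habs
          _ ≤ (α : ℝ) * ε + ((α : ℝ) + ((β : ℝ) - (α : ℝ))) * ε := add_le_add h1' h2
          _ = ((α : ℝ) + (β : ℝ)) * ε := hfin
      · subst heq
        have h1 : |(h (u + α) - h u) - (h (v + α) - h v)| ≤ ε :=
          base' u v α hun hvn
        have hαnn : (0 : ℝ) ≤ (α : ℝ) := by positivity
        have h1' : (α : ℝ) * |(h (u + α) - h u) - (h (v + α) - h v)| ≤ (α : ℝ) * ε :=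
          mul_le_mul_of_nonneg_left h1 hαnn
        rw [← abs_of_nonneg hαnn, ← abs_mul, abs_of_nonneg hαnn] at h1'
        have heq2 : (α : ℝ) * (h (u + α) - h u) - (α : ℝ) * (h (v + α) - h v)
            = (α : ℝ) * ((h (u + α) - h u) - (h (v + α) - h v)) := by ring
        rw [heq2]
        have : (α : ℝ) * ε ≤ ((α : ℝ) + (α : ℝ)) * ε := by nlinarith
        linarith [h1']
      · -- split A = [u, u+β) ∪ [u+β, u+α)
        have h1 : |(h (u + β) - h u) - (h (v + β) - h v)| ≤ ε :=
          base' u v β (by omega) hvn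
        have h2 := ih (α - β) β (u + β) v (by omega) (by omega) hβ (by omega) hvn
        rw [show u + β + (α - β) = u + α by omega] at h2
        have hcast : ((α - β : ℕ) : ℝ) = (α : ℝ) - (β : ℝ) := by
          push_cast [Nat.cast_sub (le_of_lt hgt)]; ring
        rw [hcast] at h2
        have hβnn : (0 : ℝ) ≤ (β : ℝ) := by positivity
        have h1' : (β : ℝ) * |(h (u + β) - h u) - (h (v + β) - h v)| ≤ (β : ℝ) * ε :=
          mul_le_mul_of_nonneg_left h1 hβnn
        rw [← abs_of_nonneg hβnn, ← abs_mul, abs_of_nonneg hβnn] at h1'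
        have habs := abs_add_le ((β : ℝ) * ((h (u + β) - h u) - (h (v + β) - h v)))
          ((β : ℝ) * (h (u + α) - h (u + β)) - ((α : ℝ) - (β : ℝ)) * (h (v + β) - h v))
        have hident : (β : ℝ) * (h (u + α) - h u) - (α : ℝ) * (h (v + β) - h v) =
            (β : ℝ) * ((h (u + β) - h u) - (h (v + β) - h v)) +
            ((β : ℝ) * (h (u + α) - h (u + β)) - ((α : ℝ) - (β : ℝ)) * (h (v + β) - h v)) := by
          ring
        rw [hident]
        have hfin : (β : ℝ) * ε + (((α : ℝ) - (β : ℝ)) + (β : ℝ)) * ε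
            = ((α : ℝ) + (β : ℝ)) * ε := by ring
        calc |(β : ℝ) * ((h (u + β) - h u) - (h (v + β) - h v)) +
              ((β : ℝ) * (h (u + α) - h (u + β)) - ((α : ℝ) - (β : ℝ)) * (h (v + β) - h v))|
            ≤ |(β : ℝ) * ((h (u + β) - h u) - (h (v + β) - h v))| +
              |(β : ℝ) * (h (u + α) - h (u + β)) - ((α : ℝ) - (β : ℝ)) * (h (v + β) - h v)| :=
            habs
          _ ≤ (β : ℝ) * ε + (((α : ℝ) - (β : ℝ)) + (β : ℝ)) * ε := add_le_add h1' h2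
          _ = ((α : ℝ) + (β : ℝ)) * ε := hfin
  have key' : ∀ α β u v : ℕ, 1 ≤ α → 1 ≤ β → u + α ≤ n → v + β ≤ n →
      |(β : ℝ) * (h (u + α) - h u) - (α : ℝ) * (h (v + β) - h v)| ≤ ((α : ℝ) + (β : ℝ)) * ε :=
    fun α β u v => key (α + β) α β u v le_rfl
  -- chord lemma: a single slope works for all chords
  have chord : ∃ c : ℝ, ∀ p q : ℕ, q < p → p ≤ n →
      |h p - h q - c * ((p : ℝ) - (q : ℝ))| ≤ ε := by
    rcases Nat.eq_zero_or_pos n with hn | hn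
    · exact ⟨0, fun p q hq hp => absurd hp (by omega)⟩
    · set P : Finset (ℕ × ℕ) :=
        (Finset.range (n + 1) ×ˢ Finset.range (n + 1)).filter (fun pq => pq.2 < pq.1) with hP
      have hPmem : ∀ p q : ℕ, q < p → p ≤ n → (p, q) ∈ P := by
        intro p q hq hp
        simp only [hP, Finset.mem_filter, Finset.mem_product, Finset.mem_range]
        omega
      have hPne : P.Nonempty := ⟨(1, 0), hPmem 1 0 one_pos hn⟩
      set val : ℕ × ℕ → ℝ :=
        fun pq => (h pq.1 - h pq.2 - ε) / ((pq.1 : ℝ) - (pq.2 : ℝ)) with hval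
      set c : ℝ := (P.image val).max' (hPne.image val) with hc
      refine ⟨c, ?_⟩
      obtain ⟨pq₀, hpq₀P, hpq₀⟩ := Finset.mem_image.mp ((P.image val).max'_mem (hPne.image val))
      have hpq₀' : pq₀.2 < pq₀.1 ∧ pq₀.1 ≤ n := by
        have := hpq₀P
        simp only [hP, Finset.mem_filter, Finset.mem_product, Finset.mem_range] at this
        omega
      intro p q hqp hpn
      have hpos : (0 : ℝ) < (p : ℝ) - (q : ℝ) := by
        have : (q : ℝ) < (p : ℝ) := by exact_mod_cast hqp
        linarith
      have hpos₀ : (0 : ℝ) < (pq₀.1 : ℝ) - (pq₀.2 : ℝ) := by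
        have : (pq₀.2 : ℝ) < (pq₀.1 : ℝ) := by exact_mod_cast hpq₀'.1
        linarith
      -- upper bound
      have hub : h p - h q - c * ((p : ℝ) - (q : ℝ)) ≤ ε := by
        have hle : val (p, q) ≤ c :=
          Finset.le_max' _ _ (Finset.mem_image_of_mem val (hPmem p q hqp hpn))
        have : (h p - h q - ε) / ((p : ℝ) - (q : ℝ)) ≤ c := hle
        rw [div_le_iff₀ hpos] at this
        nlinarith
      -- lower bound
      have hlb : -ε ≤ h p - h q - c * ((p : ℝ) - (q : ℝ)) := by
        have hk := key' (pq₀.1 - pq₀.2) (p - q) pq₀.2 q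
          (by omega) (by omega) (by omega) (by omega)
        rw [show pq₀.2 + (pq₀.1 - pq₀.2) = pq₀.1 by omega,
          show q + (p - q) = p by omega] at hk
        have hc1 : ((pq₀.1 - pq₀.2 : ℕ) : ℝ) = (pq₀.1 : ℝ) - (pq₀.2 : ℝ) := by
          push_cast [Nat.cast_sub (le_of_lt hpq₀'.1)]; ring
        have hc2 : ((p - q : ℕ) : ℝ) = (p : ℝ) - (q : ℝ) := by
          push_cast [Nat.cast_sub (le_of_lt hqp)]; ring
        rw [hc1, hc2] at hk
        have hk2 : ((p : ℝ) - (q : ℝ)) * (h pq₀.1 - h pq₀.2) -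
            ((pq₀.1 : ℝ) - (pq₀.2 : ℝ)) * (h p - h q)
            ≤ (((pq₀.1 : ℝ) - (pq₀.2 : ℝ)) + ((p : ℝ) - (q : ℝ))) * ε := (abs_le.mp hk).2
        have hceq : c = (h pq₀.1 - h pq₀.2 - ε) / ((pq₀.1 : ℝ) - (pq₀.2 : ℝ)) := hpq₀.symm
        have hgoal : c * ((p : ℝ) - (q : ℝ)) ≤ h p - h q + ε := by
          rw [hceq, div_mul_eq_mul_div, div_le_iff₀ hpos₀]
          nlinarith
        linarith
      exact abs_le.mpr ⟨hlb, hub⟩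
  obtain ⟨c, hchord⟩ := chord
  set vals : Finset ℝ := (Finset.range (n + 1)).image (fun k => h k - c * (k : ℝ)) with hvals
  have hne : vals.Nonempty := Finset.nonempty_range_add_one.image _
  set M : ℝ := vals.max' hne with hM
  set m : ℝ := vals.min' hne with hm
  have hMm : M - m ≤ ε := by
    obtain ⟨k₁, hk₁r, hk₁⟩ := Finset.mem_image.mp (vals.max'_mem hne)
    obtain ⟨k₂, hk₂r, hk₂⟩ := Finset.mem_image.mp (vals.min'_mem hne)
    rw [Finset.mem_range] at hk₁r hk₂r
    have hk₁' : M = h k₁ - c * (k₁ : ℝ) := by rw [hM, ← hk₁]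
    have hk₂' : m = h k₂ - c * (k₂ : ℝ) := by rw [hm, ← hk₂]
    rcases lt_trichotomy k₁ k₂ with hlt | heq | hgt
    · have := abs_le.mp (hchord k₂ k₁ hlt (by omega))
      rw [hk₁', hk₂']
      linarith [this.1]
    · rw [hk₁', hk₂', heq]; linarith
    · have := abs_le.mp (hchord k₁ k₂ hgt (by omega))
      rw [hk₁', hk₂']
      linarith [this.2]
  refine ⟨fun S => (M + m) / 2 + c * (S.card : ℝ), ⟨(M + m) / 2, fun _ => c, ?_⟩, ?_⟩
  · intro S
    rw [Finset.sum_const, nsmul_eq_mul, mul_comm]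
  · intro S
    rw [hfS S]
    have hkle : S.card ≤ n := by simpa using Finset.card_le_univ S
    have hmem : h S.card - c * (S.card : ℝ) ∈ vals :=
      Finset.mem_image_of_mem _ (Finset.mem_range.mpr (by omega))
    have h1 : h S.card - c * (S.card : ℝ) ≤ M := Finset.le_max' _ _ hmem
    have h2 : m ≤ h S.card - c * (S.card : ℝ) := Finset.min'_le _ _ hmem
    rw [abs_le]
    constructor <;> [linarith; linarith]
end

section
/- For every ε ≥ 0 and every n ≥ 1, the symmetric set function f_n over n items defined by f_n(U) = −ε and f_n(S) = 0 for every proper subset S ⊊ U is ε-modular, is (ε/2 − ε/(2n))-linear, and is not Δ-linear for any Δ < ε/2 − ε/(2n). In particular, the factor 1/2 in the statement 'every symmetric ε-modular set function is (ε/2)-linear' cannot be improved. -/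
open Finset

/-- The symmetric function `f_n` taking value `-ε` on the full set `U` and `0` on every
proper subset is ε-modular, tightly `(ε/2 - ε/(2n))`-linear.  Hence the factor `1/2` in
"every symmetric ε-modular function is (ε/2)-linear" cannot be improved. -/
theorem symmetric_lower_bound (ε : ℝ) (hε : 0 ≤ ε) (n : ℕ) (hn : 1 ≤ n) :
    IsModular (fun S : Finset (Fin n) => if S = Finset.univ then -ε else 0) ε ∧
    IsCloseLinear (fun S : Finset (Fin n) => if S = Finset.univ then -ε else 0)
      (ε / 2 - ε / (2 * n)) ∧
    (∀ Δ : ℝ, Δ < ε / 2 - ε / (2 * n) →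
      ¬ IsCloseLinear (fun S : Finset (Fin n) => if S = Finset.univ then -ε else 0) Δ) := by
  have hn0 : (0:ℝ) < (n:ℝ) := by exact_mod_cast Nat.lt_of_lt_of_le Nat.zero_lt_one hn
  have hn1 : (1:ℝ) ≤ (n:ℝ) := by exact_mod_cast hn
  refine ⟨?_, ?_, ?_⟩
  · intro S T
    by_cases hS : S = univ
    · subst hS
      by_cases hT : T = univ
      · subst hT; simp [abs_nonneg, hε]
      · have h1 : (univ : Finset (Fin n)) ∪ T = univ := by simp
        have h2 : (univ : Finset (Fin n)) ∩ T = T := by simp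
        simp [h1, h2, hT, hε]
    · by_cases hT : T = univ
      · subst hT
        have h1 : S ∪ (univ : Finset (Fin n)) = univ := by simp
        have h2 : S ∩ (univ : Finset (Fin n)) = S := by simp
        simp [h1, h2, hS, hε]
      · have hI : S ∩ T ≠ univ := by
          intro h
          exact hS (univ_subset_iff.mp (h ▸ inter_subset_left))
        by_cases hU : S ∪ T = univ
        · simp [hS, hT, hU, hI, abs_of_nonneg hε]
        · simp [hS, hT, hU, hI, hε]
  · refine ⟨fun S => (ε/2 - ε/(2*n)) + ∑ _i ∈ S, -(ε/n),
      ⟨_, _, fun S => rfl⟩, fun S => ?_⟩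
    have hsum : ∀ S : Finset (Fin n), ∑ _i ∈ S, -(ε/n) = -(S.card * (ε/n)) := by
      intro S; rw [Finset.sum_const]; push_cast [nsmul_eq_mul]; ring
    by_cases hS : S = univ
    · subst hS
      simp only [hsum, if_pos rfl, ite_true, Finset.card_univ, Fintype.card_fin]
      have hh : (n:ℝ) * (ε/n) = ε := by field_simp
      rw [hh, abs_le]
      have hq : ε/(2*(n:ℝ)) ≤ ε/2 :=
        div_le_div_of_nonneg_left hε two_pos (by linarith)
      constructor <;> linarith
    · have hcard : (S.card : ℝ) ≤ (n:ℝ) - 1 := by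
        have h0 : S.card < n := by
          simpa using Finset.card_lt_card (Finset.ssubset_univ_iff.mpr hS)
        have h1 : (S.card : ℝ) + 1 ≤ (n:ℝ) := by exact_mod_cast h0
        linarith
      simp only [hsum, if_neg hS, abs_le]
      have hc0 : (0:ℝ) ≤ (S.card : ℝ) := Nat.cast_nonneg _
      have hεn : (0:ℝ) ≤ ε/n := div_nonneg hε hn0.le
      have hpos : (0:ℝ) ≤ (S.card : ℝ) * (ε/n) := mul_nonneg hc0 hεn
      have hup : (S.card : ℝ) * (ε/n) ≤ ((n:ℝ)-1) * (ε/n) :=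
        mul_le_mul_of_nonneg_right hcard hεn
      have h2 : ((n:ℝ)-1) * (ε/n) = ε - ε/n := by field_simp
      have hdd : ε/(2*(n:ℝ)) * 2 = ε/n := by field_simp
      rw [h2] at hup
      constructor <;> linarith
  · rintro Δ hΔ ⟨g, ⟨c₀, c, hg⟩, hclose⟩
    set Sc := ∑ i, c i with hSc
    have hne0 : (∅ : Finset (Fin n)) ≠ univ := by
      have : Nonempty (Fin n) := ⟨⟨0, hn⟩⟩
      exact fun h => (Finset.univ_nonempty.ne_empty) h.symm
    have h1 : |(-ε) - (c₀ + Sc)| ≤ Δ := by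
      have := hclose univ
      simpa [hg, hSc] using this
    have h3 : |(0:ℝ) - c₀| ≤ Δ := by
      have := hclose ∅
      simpa [hg, hne0] using this
    have h2 : ∀ i : Fin n, |(0:ℝ) - (c₀ + Sc - c i)| ≤ Δ := by
      intro i
      have hthis := hclose (univ.erase i)
      have herase : (univ.erase i) ≠ (univ : Finset (Fin n)) := by
        intro h
        have : i ∈ univ.erase i := by rw [h]; exact mem_univ i
        simp at this
      have hsum : ∑ j ∈ univ.erase i, c j = Sc - c i := by
        rw [hSc, ← Finset.sum_erase_add univ c (mem_univ i)]; ring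
      simp only [hg, if_neg herase, hsum] at hthis
      have heq : (0:ℝ) - (c₀ + Sc - c i) = 0 - (c₀ + (Sc - c i)) := by ring
      rw [heq]; exact hthis
    have hsum2 : -((n:ℝ) * Δ) ≤ ∑ i : Fin n, (c₀ + Sc - c i) := by
      calc -((n:ℝ) * Δ) = ∑ _i : Fin n, (-Δ) := by
            rw [Finset.sum_const, Finset.card_univ, Fintype.card_fin, nsmul_eq_mul]; ring
        _ ≤ ∑ i : Fin n, (c₀ + Sc - c i) := by
            apply Finset.sum_le_sum
            intro i _
            have := (abs_le.mp (h2 i)).2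
            linarith
    have hid : ∑ i : Fin n, (c₀ + Sc - c i) = (n:ℝ) * (c₀ + Sc) - Sc := by
      rw [Finset.sum_sub_distrib, Finset.sum_const, Finset.card_univ, Fintype.card_fin,
        nsmul_eq_mul, ← hSc]
    rw [hid] at hsum2
    have hA := abs_le.mp h1
    have hB := abs_le.mp h3
    have h4 : c₀ + Sc ≤ -ε + Δ := by linarith [hA.1]
    have h5 : c₀ ≤ Δ := by linarith [hB.1]
    have h6 : (n:ℝ) * (c₀ + Sc) - Sc = ((n:ℝ)-1) * (c₀ + Sc) + c₀ := by ring
    have h7 : ((n:ℝ)-1) * (c₀ + Sc) ≤ ((n:ℝ)-1) * (Δ - ε) := by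
      apply mul_le_mul_of_nonneg_left _ (by linarith)
      linarith
    have h8 : -((n:ℝ)*Δ) ≤ ((n:ℝ)-1) * (Δ - ε) + Δ := by
      rw [h6] at hsum2; linarith
    have h9 : ((n:ℝ)-1)*ε ≤ 2*(n:ℝ)*Δ := by nlinarith
    have h10 : ε/2 - ε/(2*(n:ℝ)) = ((n:ℝ)-1)*ε/(2*(n:ℝ)) := by field_simp
    rw [h10] at hΔ
    rw [lt_div_iff₀ (by positivity : (0:ℝ) < 2*(n:ℝ))] at hΔ
    nlinarith
end

section
/- Every submodular ε-modular set function is (ε/2)-linear. That is, if f is a set function over n items satisfying f(S)+f(T) ≥ f(S∪T)+f(S∩T) for every two sets S,T ⊆ U, and |f(S)+f(T)−f(S∪T)−f(S∩T)| ≤ ε for every two sets S,T ⊆ U, then there exists a linear set function g with |f(S)−g(S)| ≤ ε/2 for every set S ⊆ U. -/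
open Finset

/-- `f` is submodular. -/
def IsSubmodular {n : ℕ} (f : Finset (Fin n) → ℝ) : Prop :=
  ∀ S T : Finset (Fin n), f (S ∪ T) + f (S ∩ T) ≤ f S + f T

/-! Order the items and let `c i = f({j ≤ i}) - f({j < i})` be the marginal value of `i` along
the resulting chain. Submodularity gives `∑_{i ∈ S} c i ≤ f S - f ∅` for every `S`, with equality
for `S = U` by telescoping. Applying the upper bound to the complement of `S` and ε-modularity
to the pair `S, Sᶜ` gives `∑_{i ∈ S} c i ≥ f S - f ∅ - ε`, so `f ∅ + ε/2 + ∑_{i ∈ S} c i` is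
within `ε/2` of `f`. -/

section ChainMarginal

variable {α : Type*} [LinearOrder α] [LocallyFiniteOrderBot α]

def chainMarginal (f : Finset α → ℝ) (i : α) : ℝ :=
  f (Iic i) - f (Iio i)

variable [DecidableEq α] {f : Finset α → ℝ}

theorem chainMarginal_le_of_forall_lt
    (hsub : ∀ S T : Finset α, f (S ∪ T) + f (S ∩ T) ≤ f S + f T) {a : α} {s : Finset α}
    (hs : ∀ x ∈ s, x < a) : chainMarginal f a ≤ f (insert a s) - f s := by
  have hunion : insert a s ∪ Iio a = Iic a := by
    ext x
    simp only [mem_union, mem_insert, mem_Iio, mem_Iic]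
    constructor
    · rintro ((rfl | hx) | hx)
      exacts [le_rfl, (hs x hx).le, hx.le]
    · intro hx
      rcases hx.lt_or_eq with hx | rfl
      exacts [Or.inr hx, Or.inl (Or.inl rfl)]
  have hinter : insert a s ∩ Iio a = s := by
    ext x
    simp only [mem_inter, mem_insert, mem_Iio]
    constructor
    · rintro ⟨rfl | hx, hlt⟩
      exacts [absurd hlt (lt_irrefl x), hx]
    · exact fun hx => ⟨Or.inr hx, hs x hx⟩
  have h := hsub (insert a s) (Iio a)
  rw [hunion, hinter] at h
  unfold chainMarginal
  linarith

theorem sum_chainMarginal_le (hsub : ∀ S T : Finset α, f (S ∪ T) + f (S ∩ T) ≤ f S + f T)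
    (S : Finset α) : ∑ i ∈ S, chainMarginal f i ≤ f S - f ∅ := by
  induction S using Finset.induction_on_max with
  | empty => simp
  | insert a s hs ih =>
    rw [sum_insert fun ha => lt_irrefl a (hs a ha)]
    linarith [chainMarginal_le_of_forall_lt hsub hs]

theorem sum_chainMarginal_of_isLowerSet (S : Finset α) (hS : IsLowerSet (S : Set α)) :
    ∑ i ∈ S, chainMarginal f i = f S - f ∅ := by
  induction S using Finset.induction_on_max with
  | empty => simp
  | insert a s hs ih =>
    have hs_eq : s = Iio a := by
      ext x
      rw [mem_Iio]
      refine ⟨hs x, fun hx => ?_⟩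
      have hx' : x ∈ insert a s := hS hx.le (by simp)
      exact (mem_insert.mp hx').resolve_left hx.ne
    subst hs_eq
    rw [sum_insert notMem_Iio_self, ih (by simpa using isLowerSet_Iio a), Iio_insert]
    unfold chainMarginal
    ring

theorem sum_chainMarginal_univ [Fintype α] :
    ∑ i, chainMarginal f i = f univ - f ∅ :=
  sum_chainMarginal_of_isLowerSet univ (by simpa using isLowerSet_univ)

theorem sub_le_sum_chainMarginal [Fintype α] {ε : ℝ}
    (hsub : ∀ S T : Finset α, f (S ∪ T) + f (S ∩ T) ≤ f S + f T)
    (hmod : ∀ S T : Finset α, f S + f T - f (S ∪ T) - f (S ∩ T) ≤ ε) (S : Finset α) :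
    f S - f ∅ - ε ≤ ∑ i ∈ S, chainMarginal f i := by
  have hsplit := sum_add_sum_compl S (chainMarginal f)
  have hcompl := sum_chainMarginal_le hsub Sᶜ
  have hpair := hmod S Sᶜ
  rw [union_compl, inter_compl] at hpair
  linarith [sum_chainMarginal_univ (f := f)]

end ChainMarginal

theorem isCloseLinear_of_sum_bounds {n : ℕ} {f : Finset (Fin n) → ℝ} {ε : ℝ} (c : Fin n → ℝ)
    (hle : ∀ S, ∑ i ∈ S, c i ≤ f S - f ∅) (hge : ∀ S, f S - f ∅ - ε ≤ ∑ i ∈ S, c i) :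
    IsCloseLinear f (ε / 2) :=
  ⟨fun S => f ∅ + ε / 2 + ∑ i ∈ S, c i, ⟨f ∅ + ε / 2, c, fun _ => rfl⟩,
    fun S => abs_le.mpr ⟨by linarith [hle S], by linarith [hge S]⟩⟩

/-- Every submodular ε-modular set function is (ε/2)-linear. -/
theorem submodular_modular_implies_half_eps_linear {n : ℕ} (f : Finset (Fin n) → ℝ) (ε : ℝ)
    (hsub : IsSubmodular f) (hmod : IsModular f ε) : IsCloseLinear f (ε / 2) :=
  isCloseLinear_of_sum_bounds (chainMarginal f) (sum_chainMarginal_le hsub)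
    (sub_le_sum_chainMarginal hsub fun S T => (abs_le.mp (hmod S T)).2)
end

section
/- Let f be a weakly ε-modular set function over n items, let M = max_{S ⊆ U} |f(S)|, and suppose the zero function is a closest linear function to f, i.e., for every linear set function g it holds that max_{S ⊆ U} |f(S)−g(S)| ≥ M. Then −ε ≤ f(∅) + f(U) ≤ ε. -/
open Finset

/-- If `f` is weakly ε-modular, `M = max_S |f(S)|`, and the zero function is a closest
linear function to `f` (every linear `g` has `max_S |f(S) - g(S)| ≥ M`), then
`-ε ≤ f(∅) + f(U) ≤ ε`. -/
theorem empty_plus_full_bounded {n : ℕ} (f : Finset (Fin n) → ℝ) (ε M : ℝ)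
    (hf : IsWeaklyModular f ε)
    (hM : ∀ S : Finset (Fin n), |f S| ≤ M) (hMex : ∃ S : Finset (Fin n), |f S| = M)
    (hclosest : ∀ g : Finset (Fin n) → ℝ, IsLinear g → ∃ S : Finset (Fin n), M ≤ |f S - g S|) :
    -ε ≤ f ∅ + f Finset.univ ∧ f ∅ + f Finset.univ ≤ ε := by
  set a := f ∅ + f Finset.univ with ha
  have key : ∀ S : Finset (Fin n), |f S + f Sᶜ - a| ≤ ε := by
    intro S
    have h := hf S Sᶜ disjoint_compl_right
    rw [Finset.union_compl, Finset.inter_compl] at h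
    have : f S + f Sᶜ - a = f S + f Sᶜ - f Finset.univ - f ∅ := by rw [ha]; ring
    rw [this]; exact h
  constructor
  · by_contra h
    push_neg at h
    have hc : a + ε < 0 := by linarith
    set c := (a + ε) / 2 with hcdef
    obtain ⟨S, hS⟩ := hclosest (fun _ => c) ⟨c, 0, by simp⟩
    rcases le_abs.mp hS with h1 | h1
    · have h2 := key S
      have h3 := abs_le.mp (hM Sᶜ)
      have h4 := abs_le.mp (hM S)
      have := abs_le.mp h2
      linarith [this.2, h3.1, h4.2]
    · have h4 := abs_le.mp (hM S)
      linarith [h4.1]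
  · by_contra h
    push_neg at h
    have hc : 0 < a - ε := by linarith
    set c := (a - ε) / 2 with hcdef
    obtain ⟨S, hS⟩ := hclosest (fun _ => c) ⟨c, 0, by simp⟩
    rcases le_abs.mp hS with h1 | h1
    · have h4 := abs_le.mp (hM S)
      linarith [h4.2]
    · have h2 := key S
      have h3 := abs_le.mp (hM Sᶜ)
      have h4 := abs_le.mp (hM S)
      have := abs_le.mp h2
      linarith [this.1, h3.2, h4.1]
end

section
/- For every δ > 0 there exist a positive integer n and a set function f over n items such that f is 2-modular and f is not (3/2 − δ)-linear. (Hence the strong Kalton constant satisfies K_s ≥ 3/4.) -/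
open Finset

/-- the set {0,1,2,3,4,5} of "real" items; item 6 is a dummy. -/
def ABpk : Finset (Fin 7) := {0,1,2,3,4,5}

/-- `S` lies in the cube interval `[C, ABpk]`. -/
def gd (C S : Finset (Fin 7)) : Prop := C ⊆ S ∧ S ⊆ ABpk

instance (C S : Finset (Fin 7)) : Decidable (gd C S) := instDecidableAnd

/-- The integer-valued witness function on 7 items:
`2·1_{[B,A∪B]} - 2·1_{[A,A∪B]}` with `A = {0,1,2}`, `B = {3,4,5}`. -/
def Fpk (S : Finset (Fin 7)) : ℤ :=
  2 * (if gd {3,4,5} S then 1 else 0) - 2 * (if gd {0,1,2} S then 1 else 0)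

lemma ind_imp {p q r : Prop} [Decidable p] [Decidable q] [Decidable r] (h : p → q → r) :
    (if p then (1:ℤ) else 0) + (if q then 1 else 0) - 1 ≤ (if r then 1 else 0) := by
  split_ifs <;> simp_all

lemma ind_bd (p : Prop) [Decidable p] :
    0 ≤ (if p then (1:ℤ) else 0) ∧ (if p then (1:ℤ) else 0) ≤ 1 := by
  split_ifs <;> simp

lemma gd_union {C S T : Finset (Fin 7)} (hS : gd C S) (hT : gd C T) : gd C (S ∪ T) :=
  ⟨hS.1.trans subset_union_left, union_subset hS.2 hT.2⟩

lemma gd_inter {C S T : Finset (Fin 7)} (hS : gd C S) (hT : gd C T) : gd C (S ∩ T) :=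
  ⟨subset_inter hS.1 hT.1, inter_subset_left.trans hS.2⟩

lemma gd_left {C S T : Finset (Fin 7)} (hU : gd C (S ∪ T)) (hI : gd C (S ∩ T)) : gd C S :=
  ⟨hI.1.trans inter_subset_left, subset_union_left.trans hU.2⟩

lemma gd_right {C S T : Finset (Fin 7)} (hU : gd C (S ∪ T)) (hI : gd C (S ∩ T)) : gd C T :=
  ⟨hI.1.trans inter_subset_right, subset_union_right.trans hU.2⟩

lemma gd_mixI_left {C C' S T : Finset (Fin 7)} (hI : gd C (S ∩ T)) (hS : gd C' S) : gd C S :=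
  ⟨hI.1.trans inter_subset_left, hS.2⟩

lemma gd_mixI_right {C C' S T : Finset (Fin 7)} (hI : gd C (S ∩ T)) (hT : gd C' T) : gd C T :=
  ⟨hI.1.trans inter_subset_right, hT.2⟩

lemma gd_mixU_left {C C' S T : Finset (Fin 7)} (hU : gd C (S ∪ T)) (hS : gd C' S) :
    gd C' (S ∪ T) := ⟨hS.1.trans subset_union_left, hU.2⟩

lemma gd_mixU_right {C C' S T : Finset (Fin 7)} (hU : gd C (S ∪ T)) (hT : gd C' T) :
    gd C' (S ∪ T) := ⟨hT.1.trans subset_union_right, hU.2⟩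

lemma Fpk_modular (S T : Finset (Fin 7)) :
    |Fpk S + Fpk T - Fpk (S ∪ T) - Fpk (S ∩ T)| ≤ 2 := by
  simp only [Fpk]
  have h1 := ind_imp (gd_union (C := ({0,1,2} : Finset (Fin 7))) (S := S) (T := T))
  have h2 := ind_imp (gd_inter (C := ({0,1,2} : Finset (Fin 7))) (S := S) (T := T))
  have h3 := ind_imp (gd_left (C := ({0,1,2} : Finset (Fin 7))) (S := S) (T := T))
  have h4 := ind_imp (gd_right (C := ({0,1,2} : Finset (Fin 7))) (S := S) (T := T))
  have h5 := ind_imp (gd_union (C := ({3,4,5} : Finset (Fin 7))) (S := S) (T := T))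
  have h6 := ind_imp (gd_inter (C := ({3,4,5} : Finset (Fin 7))) (S := S) (T := T))
  have h7 := ind_imp (gd_left (C := ({3,4,5} : Finset (Fin 7))) (S := S) (T := T))
  have h8 := ind_imp (gd_right (C := ({3,4,5} : Finset (Fin 7))) (S := S) (T := T))
  have h9 := ind_imp (gd_mixI_left (C := ({0,1,2} : Finset (Fin 7)))
    (C' := ({3,4,5} : Finset (Fin 7))) (S := S) (T := T))
  have h10 := ind_imp (gd_mixI_right (C := ({0,1,2} : Finset (Fin 7)))
    (C' := ({3,4,5} : Finset (Fin 7))) (S := S) (T := T))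
  have h11 := ind_imp (gd_mixI_left (C := ({3,4,5} : Finset (Fin 7)))
    (C' := ({0,1,2} : Finset (Fin 7))) (S := S) (T := T))
  have h12 := ind_imp (gd_mixI_right (C := ({3,4,5} : Finset (Fin 7)))
    (C' := ({0,1,2} : Finset (Fin 7))) (S := S) (T := T))
  have h13 := ind_imp (gd_mixU_left (C := ({0,1,2} : Finset (Fin 7)))
    (C' := ({3,4,5} : Finset (Fin 7))) (S := S) (T := T))
  have h14 := ind_imp (gd_mixU_right (C := ({0,1,2} : Finset (Fin 7)))
    (C' := ({3,4,5} : Finset (Fin 7))) (S := S) (T := T))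
  have h15 := ind_imp (gd_mixU_left (C := ({3,4,5} : Finset (Fin 7)))
    (C' := ({0,1,2} : Finset (Fin 7))) (S := S) (T := T))
  have h16 := ind_imp (gd_mixU_right (C := ({3,4,5} : Finset (Fin 7)))
    (C' := ({0,1,2} : Finset (Fin 7))) (S := S) (T := T))
  have b1 := ind_bd (gd {0,1,2} S); have b2 := ind_bd (gd {0,1,2} T)
  have b3 := ind_bd (gd {0,1,2} (S ∪ T)); have b4 := ind_bd (gd {0,1,2} (S ∩ T))
  have b5 := ind_bd (gd {3,4,5} S); have b6 := ind_bd (gd {3,4,5} T)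
  have b7 := ind_bd (gd {3,4,5} (S ∪ T)); have b8 := ind_bd (gd {3,4,5} (S ∩ T))
  set aS := (if gd {0,1,2} S then (1:ℤ) else 0) with haS
  set aT := (if gd {0,1,2} T then (1:ℤ) else 0) with haT
  set aU := (if gd {0,1,2} (S ∪ T) then (1:ℤ) else 0) with haU
  set aI := (if gd {0,1,2} (S ∩ T) then (1:ℤ) else 0) with haI
  set bS := (if gd {3,4,5} S then (1:ℤ) else 0) with hbS
  set bT := (if gd {3,4,5} T then (1:ℤ) else 0) with hbT
  set bU := (if gd {3,4,5} (S ∪ T) then (1:ℤ) else 0) with hbU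
  set bI := (if gd {3,4,5} (S ∩ T) then (1:ℤ) else 0) with hbI
  rw [abs_le]
  omega

/-- For every δ > 0 there is a 2-modular set function that is not (3/2-δ)-linear.
Hence the strong Kalton constant satisfies `K_s ≥ 3/4`. -/
theorem strong_kalton_pawlik_lower_bound (δ : ℝ) (hδ : 0 < δ) :
    ∃ (n : ℕ) (f : Finset (Fin n) → ℝ), 0 < n ∧
      IsModular f 2 ∧ ¬ IsCloseLinear f (3 / 2 - δ) := by
  refine ⟨7, fun S => (Fpk S : ℝ), by norm_num, ?_, ?_⟩
  · intro S T
    have h := Fpk_modular S T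
    have h2 : ((|Fpk S + Fpk T - Fpk (S ∪ T) - Fpk (S ∩ T)| : ℤ) : ℝ) ≤ 2 := by
      exact_mod_cast h
    rw [Int.cast_abs] at h2
    push_cast at h2 ⊢
    exact h2
  · rintro ⟨g, ⟨c0, c, hg⟩, hclose⟩
    set P1 : Finset (Fin 7) := {0,1,3,4,5} with hP1
    set P2 : Finset (Fin 7) := {0,2,3,4,5} with hP2
    set P3 : Finset (Fin 7) := {1,2,3,4,5} with hP3
    set P4 : Finset (Fin 7) := {0,1,2,6} with hP4
    set N1 : Finset (Fin 7) := {0,1,2,3,4} with hN1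
    set N2 : Finset (Fin 7) := {0,1,2,3,5} with hN2
    set N3 : Finset (Fin 7) := {0,1,2,4,5} with hN3
    set N4 : Finset (Fin 7) := {3,4,5,6} with hN4
    have fP1 : Fpk P1 = 2 := by decide
    have fP2 : Fpk P2 = 2 := by decide
    have fP3 : Fpk P3 = 2 := by decide
    have fP4 : Fpk P4 = 0 := by decide
    have fN1 : Fpk N1 = -2 := by decide
    have fN2 : Fpk N2 = -2 := by decide
    have fN3 : Fpk N3 = -2 := by decide
    have fN4 : Fpk N4 = 0 := by decide
    have gP1 : g P1 = c0 + (c 0 + c 1 + c 3 + c 4 + c 5) := by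
      rw [hg P1, hP1]
      simp [Finset.sum_insert, Finset.mem_insert]
      ring
    have gP2 : g P2 = c0 + (c 0 + c 2 + c 3 + c 4 + c 5) := by
      rw [hg P2, hP2]
      simp [Finset.sum_insert, Finset.mem_insert]
      ring
    have gP3 : g P3 = c0 + (c 1 + c 2 + c 3 + c 4 + c 5) := by
      rw [hg P3, hP3]
      simp [Finset.sum_insert, Finset.mem_insert]
      ring
    have gP4 : g P4 = c0 + (c 0 + c 1 + c 2 + c 6) := by
      rw [hg P4, hP4]
      simp [Finset.sum_insert, Finset.mem_insert]
      ring
    have gN1 : g N1 = c0 + (c 0 + c 1 + c 2 + c 3 + c 4) := by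
      rw [hg N1, hN1]
      simp [Finset.sum_insert, Finset.mem_insert]
      ring
    have gN2 : g N2 = c0 + (c 0 + c 1 + c 2 + c 3 + c 5) := by
      rw [hg N2, hN2]
      simp [Finset.sum_insert, Finset.mem_insert]
      ring
    have gN3 : g N3 = c0 + (c 0 + c 1 + c 2 + c 4 + c 5) := by
      rw [hg N3, hN3]
      simp [Finset.sum_insert, Finset.mem_insert]
      ring
    have gN4 : g N4 = c0 + (c 3 + c 4 + c 5 + c 6) := by
      rw [hg N4, hN4]
      simp [Finset.sum_insert, Finset.mem_insert]
      ring
    have bP1 := abs_le.mp (hclose P1)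
    have bP2 := abs_le.mp (hclose P2)
    have bP3 := abs_le.mp (hclose P3)
    have bP4 := abs_le.mp (hclose P4)
    have bN1 := abs_le.mp (hclose N1)
    have bN2 := abs_le.mp (hclose N2)
    have bN3 := abs_le.mp (hclose N3)
    have bN4 := abs_le.mp (hclose N4)
    simp only [fP1] at bP1; simp only [fP2] at bP2
    simp only [fP3] at bP3; simp only [fP4] at bP4
    simp only [fN1] at bN1; simp only [fN2] at bN2
    simp only [fN3] at bN3; simp only [fN4] at bN4
    push_cast at bP1 bP2 bP3 bP4 bN1 bN2 bN3 bN4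
    linarith [bP1.1, bP2.1, bP3.1, bP4.1, bN1.2, bN2.2, bN3.2, bN4.2,
      gP1, gP2, gP3, gP4, gN1, gN2, gN3, gN4]
end

section
/- Let f be a weakly ε-modular set function over n items, let M = max_{S ⊆ U} |f(S)|, and suppose the zero function is a closest linear function to f, i.e., for every linear set function g it holds that max_{S ⊆ U} |f(S)−g(S)| ≥ M. Then there exists a positive integer k' such that for every positive integer multiple k of k' there exists a multiset 𝒢 of 2k subsets of U (the same set may appear multiple times, with appearances counted with multiplicity) such that: (1) every item i ∈ U belongs to exactly k members of 𝒢; and (2) the average deficit of 𝒢 plus the average surplus of the complement multiset is at most ε, i.e., ∑_{S ∈ 𝒢} [(M − f(S)) + (M + f(U∖S))] ≤ 2kε. -/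
open Finset

/-!
The hypothesis says that the sup-distance from `f` to the subspace of linear set functions is at
least `M`. For `M > 0`, separating the open ball of radius `M` around `f` from that subspace
(Hahn–Banach) yields a nonzero signed weighting `φ` of the sets that is orthogonal to all linear
set functions and satisfies `⟨φ, f⟩ ≥ M ‖φ‖₁`, i.e. a dual solution of the approximation LP.
These constraints have rational coefficients, so perturbing the `ℚ`-coordinates of the entries of
`φ` keeps them, keeps the signs and need not lower the objective: `φ` may be taken integral.
Take `φ(S)⁺` copies of `S` and `φ(S)⁻` copies of `U ∖ S`. Orthogonality to the constants and to
the indicators `S ↦ [i ∈ S]` puts every item in exactly half of the members, and since weak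
modularity gives `f S + f (U ∖ S) = f U + f ∅ ± ε`, the total cost is at most
`|𝒢| ε + 2 (M ‖φ‖₁ - ⟨φ, f⟩) ≤ |𝒢| ε`. For `M ≤ 0` the pair `{∅, U}` already works.
-/

open Filter Topology

theorem sign_eq_of_abs_sub_lt {α : Type*} [CommRing α] [LinearOrder α] [IsStrictOrderedRing α]
    {x y : α} (h : |y - x| < |x|) : SignType.sign y = SignType.sign x := by
  rcases lt_trichotomy x 0 with hx | rfl | hx
  · have hy : y < 0 := by linarith [(abs_lt.1 (abs_of_neg hx ▸ h)).2]
    rw [sign_neg hx, sign_neg hy]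
  · exact absurd h (by simp)
  · have hy : 0 < y := by linarith [(abs_lt.1 (abs_of_pos hx ▸ h)).1]
    rw [sign_pos hx, sign_pos hy]

section RationalApproximation

variable {ι : Type*} [Fintype ι]

theorem exists_rat_coords (x : ι → ℝ) :
    ∃ (d : ℕ) (e : Fin d → ℝ) (c : ι → Fin d → ℚ), (∀ p, x p = ∑ j, (c p j : ℝ) * e j) ∧
      ∀ a : ι → ℚ, ∑ p, (a p : ℝ) * x p = 0 → ∀ j, ∑ p, a p * c p j = 0 := by
  let V := Submodule.span ℚ (Set.range x)
  have : FiniteDimensional ℚ V := FiniteDimensional.span_of_finite ℚ (Set.finite_range x)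
  let B := Module.finBasis ℚ V
  let v : ι → V := fun p => ⟨x p, Submodule.subset_span ⟨p, rfl⟩⟩
  refine ⟨_, fun j => B j, fun p => B.repr (v p), fun p => ?_, fun a ha j => ?_⟩
  · have h := congrArg Subtype.val (B.sum_repr (v p))
    simp only [Submodule.coe_sum, Submodule.coe_smul, Rat.smul_def] at h
    exact h.symm
  · have hv : ∑ p, a p • v p = 0 :=
      Subtype.ext (by simpa [Submodule.coe_sum, Rat.smul_def] using ha)
    simpa [mul_comm] using congrArg (fun w => B.repr w j) hv

theorem exists_rat_sign_eq_of_relations (x L : ι → ℝ) :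
    ∃ q : ι → ℚ, (∀ a : ι → ℚ, ∑ p, (a p : ℝ) * x p = 0 → ∑ p, a p * q p = 0) ∧
      (∀ p, SignType.sign (q p : ℝ) = SignType.sign (x p)) ∧
      ∑ p, L p * x p ≤ ∑ p, L p * q p := by
  classical
  obtain ⟨d, e, c, hx, hrel⟩ := exists_rat_coords x
  let F : (Fin d → ℝ) → ι → ℝ := fun s p => ∑ j, (c p j : ℝ) * s j
  have hnear : ∀ᶠ s in 𝓝 e, ∀ p, x p ≠ 0 → |F s p - x p| < |x p| := by
    refine eventually_all.2 fun p => ?_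
    by_cases hp : x p = 0
    · exact Eventually.of_forall fun _ h => absurd hp h
    have hcont : Continuous fun s => F s p := by fun_prop
    have hlim := hcont.tendsto e
    rw [show F e p = x p from (hx p).symm] at hlim
    filter_upwards [hlim.eventually (Metric.ball_mem_nhds _ (abs_pos.2 hp))] with s hs _
    simpa [Real.dist_eq] using hs
  obtain ⟨δ, hδ, hball⟩ := Metric.eventually_nhds_iff.1 hnear
  let r : Fin d → ℝ := fun j => ∑ p, L p * c p j
  have hF : ∀ s, ∑ p, L p * F s p = ∑ j, r j * s j := by
    intro s
    simp only [F, r, mul_sum, sum_mul]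
    rw [sum_comm]
    simp only [mul_assoc]
  have ht : ∀ j, ∃ t : ℚ, dist (t : ℝ) (e j) < δ ∧ r j * e j ≤ r j * t := by
    intro j
    rcases le_total 0 (r j) with hr | hr
    · obtain ⟨t, h₁, h₂⟩ := exists_rat_btwn (lt_add_of_pos_right (e j) hδ)
      refine ⟨t, ?_, mul_le_mul_of_nonneg_left h₁.le hr⟩
      rw [Real.dist_eq, abs_lt]
      constructor <;> linarith
    · obtain ⟨t, h₁, h₂⟩ := exists_rat_btwn (sub_lt_self (e j) hδ)
      refine ⟨t, ?_, mul_le_mul_of_nonpos_left h₂.le hr⟩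
      rw [Real.dist_eq, abs_lt]
      constructor <;> linarith
  choose t htδ htr using ht
  let q : ι → ℚ := fun p => ∑ j, c p j * t j
  have hq : ∀ p, (q p : ℝ) = F (fun j => t j) p := fun p => by simp [q, F]
  have hqrel : ∀ a : ι → ℚ, ∑ p, (a p : ℝ) * x p = 0 → ∑ p, a p * q p = 0 := by
    intro a ha
    simp only [q, mul_sum]
    rw [sum_comm]
    simp only [← mul_assoc, ← sum_mul, hrel a ha, zero_mul, sum_const_zero]
  refine ⟨q, hqrel, fun p => ?_, ?_⟩
  · by_cases hp : x p = 0
    · have h := hqrel (fun p' => if p' = p then 1 else 0) (by simp [apply_ite, hp])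
      simp only [ite_mul, one_mul, zero_mul, sum_ite_eq', mem_univ, if_true] at h
      simp [h, hp]
    · refine sign_eq_of_abs_sub_lt ?_
      rw [hq]
      exact hball ((dist_pi_lt_iff hδ).2 htδ) p hp
  · calc ∑ p, L p * x p = ∑ p, L p * F e p := by simp only [F, ← hx]
      _ = ∑ j, r j * e j := hF e
      _ ≤ ∑ j, r j * t j := sum_le_sum fun j _ => htr j
      _ = ∑ p, L p * q p := by rw [← hF]; simp only [hq]

theorem exists_pos_nat_mul_eq_int (q : ι → ℚ) :
    ∃ N : ℕ, 0 < N ∧ ∃ z : ι → ℤ, ∀ p, (z p : ℚ) = N * q p := by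
  classical
  refine ⟨∏ p, (q p).den, prod_pos fun p _ => (q p).den_pos,
    fun p => (∏ p' ∈ univ.erase p, (q p').den : ℕ) * (q p).num, fun p => ?_⟩
  rw [← prod_erase_mul _ _ (mem_univ p)]
  push_cast
  rw [mul_assoc, Rat.den_mul_eq_num]

end RationalApproximation

theorem mul_sum_abs_le_of_forall_mem_closedBall {ι : Type*} [Fintype ι] {f ψ : ι → ℝ} {M : ℝ}
    (hM : 0 ≤ M) (h : ∀ a ∈ Metric.closedBall f M, ∑ p, a p * ψ p ≤ 0) :
    M * ∑ p, |ψ p| ≤ -∑ p, f p * ψ p := by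
  let σ : ι → ℝ := fun p => if 0 ≤ ψ p then M else -M
  have hσ : ∀ p, σ p * ψ p = M * |ψ p| := by
    intro p
    by_cases hp : 0 ≤ ψ p
    · simp [σ, hp, abs_of_nonneg hp]
    · simp [σ, hp, abs_of_neg (not_le.1 hp)]
  have hmem : f + σ ∈ Metric.closedBall f M := by
    rw [Metric.mem_closedBall, dist_pi_le_iff hM]
    intro p
    by_cases hp : 0 ≤ ψ p <;> simp [σ, hp, abs_of_nonneg hM]
  have h' := h _ hmem
  simp only [Pi.add_apply, add_mul, sum_add_distrib, hσ, ← mul_sum] at h'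
  linarith

section SetFunctions

variable {n : ℕ}

def IsDualCertificate (f : Finset (Fin n) → ℝ) (M : ℝ) (φ : Finset (Fin n) → ℝ) : Prop :=
  ∑ S, φ S = 0 ∧ (∀ i, ∑ S with i ∈ S, φ S = 0) ∧ M * ∑ S, |φ S| ≤ ∑ S, φ S * f S

def linearSetFunctions (n : ℕ) : Submodule ℝ (Finset (Fin n) → ℝ) where
  carrier := {g | IsLinear g}
  add_mem' := by
    rintro g h ⟨c₀, c, hg⟩ ⟨d₀, d, hh⟩
    exact ⟨c₀ + d₀, c + d, fun S => by simp [hg, hh, sum_add_distrib]; ring⟩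
  zero_mem' := ⟨0, 0, by simp⟩
  smul_mem' := by
    rintro r g ⟨c₀, c, hg⟩
    exact ⟨r * c₀, r • c, fun S => by simp [hg, mul_add, mul_sum]⟩

theorem exists_dualCertificate {f : Finset (Fin n) → ℝ} {M : ℝ} (hM : 0 < M)
    (hclosest : ∀ g, IsLinear g → ∃ S, M ≤ |f S - g S|) :
    ∃ φ, φ ≠ 0 ∧ IsDualCertificate f M φ := by
  have hdisj : Disjoint (Metric.ball f M) (linearSetFunctions n : Set _) := by
    refine Set.disjoint_left.2 fun g hg hlin => ?_
    obtain ⟨S, hS⟩ := hclosest g hlin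
    have h := (dist_pi_lt_iff hM).1 (Metric.mem_ball'.1 hg) S
    rw [Real.dist_eq] at h
    linarith
  obtain ⟨ℓ, u, hball, hlin⟩ :=
    geometric_hahn_banach_open (convex_ball f M) Metric.isOpen_ball (Submodule.convex _) hdisj
  have hu : u ≤ 0 := by simpa using hlin 0 (zero_mem _)
  have hℓlin : ∀ g, IsLinear g → ℓ g = 0 := by
    intro g hg
    by_contra hne
    have h := hlin (((u - 1) / ℓ g) • g) ((linearSetFunctions n).smul_mem _ hg)
    rw [map_smul, smul_eq_mul, div_mul_cancel₀ _ hne] at h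
    linarith
  have hclosed : ∀ a ∈ Metric.closedBall f M, ℓ a ≤ 0 := by
    rw [← closure_ball f hM.ne']
    refine closure_minimal (fun a ha => ?_) (isClosed_le ℓ.continuous continuous_const)
    exact ((hball a ha).trans_le hu).le
  let ψ : Finset (Fin n) → ℝ := fun S => ℓ fun T => if S = T then 1 else 0
  have hℓ : ∀ a, ℓ a = ∑ S, a S * ψ S := fun a => ℓ.toLinearMap.pi_apply_eq_sum_univ a
  refine ⟨-ψ, fun hψ => ?_, ?_, fun i => ?_, ?_⟩
  · have h := hball f (Metric.mem_ball_self hM)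
    simp only [hℓ, neg_eq_zero.1 hψ, Pi.zero_apply, mul_zero, sum_const_zero] at h
    linarith
  · simpa [hℓ] using hℓlin (fun _ => 1) ⟨1, 0, by simp⟩
  · have h := hℓlin (fun S => if i ∈ S then 1 else 0)
      ⟨0, Pi.single i 1, fun S => by simp [sum_pi_single']⟩
    simpa [hℓ, sum_filter] using h
  · have h := mul_sum_abs_le_of_forall_mem_closedBall hM.le fun a ha => hℓ a ▸ hclosed a ha
    simpa [mul_comm (f _)] using h

theorem IsDualCertificate.smul {f φ : Finset (Fin n) → ℝ} {M : ℝ} (hφ : IsDualCertificate f M φ)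
    {c : ℝ} (hc : 0 < c) : IsDualCertificate f M (c • φ) := by
  obtain ⟨hsum, hmom, hobj⟩ := hφ
  refine ⟨by simp [← mul_sum, hsum], fun i => by simp [← mul_sum, hmom i], ?_⟩
  simp only [Pi.smul_apply, smul_eq_mul, abs_mul, abs_of_pos hc, mul_assoc, ← mul_sum]
  nlinarith

theorem IsDualCertificate.exists_rat {f φ : Finset (Fin n) → ℝ} {M : ℝ}
    (hφ : IsDualCertificate f M φ) (hφ0 : φ ≠ 0) :
    ∃ q : Finset (Fin n) → ℚ, q ≠ 0 ∧ IsDualCertificate f M fun S => (q S : ℝ) := by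
  obtain ⟨hsum, hmom, hobj⟩ := hφ
  -- on vectors with the sign pattern of `φ`, the `ℓ¹`-norm is the linear map `⟨sign φ, ·⟩`
  obtain ⟨q, hrel, hsign, hL⟩ :=
    exists_rat_sign_eq_of_relations φ fun S => f S - M * SignType.sign (φ S)
  have habs : ∀ S, |(q S : ℝ)| = SignType.sign (φ S) * q S := fun S => by
    rw [← hsign S, mul_comm, self_mul_sign]
  refine ⟨q, fun hq0 => hφ0 (funext fun S => ?_), ?_, fun i => ?_, ?_⟩
  · exact sign_eq_zero_iff.1 (by simpa [hq0] using (hsign S).symm)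
  · show ∑ S, (q S : ℝ) = 0
    exact_mod_cast (by simpa using hrel 1 (by simpa using hsum) : ∑ S, q S = 0)
  · have h := hrel (fun S => if i ∈ S then 1 else 0)
      (by simpa [apply_ite, sum_filter] using hmom i)
    simp only [ite_mul, one_mul, zero_mul, ← sum_filter] at h
    show ∑ S with i ∈ S, (q S : ℝ) = 0
    exact_mod_cast h
  · have hexpand : ∀ y : Finset (Fin n) → ℝ, ∑ S, (f S - M * SignType.sign (φ S)) * y S
        = ∑ S, y S * f S - M * ∑ S, SignType.sign (φ S) * y S := fun y => by
      simp only [sub_mul, sum_sub_distrib, mul_sum, mul_assoc, mul_comm (f _)]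
    simp only [hexpand, ← habs, mul_comm (SignType.sign _ : ℝ), self_mul_sign] at hL
    show M * ∑ S, |(q S : ℝ)| ≤ ∑ S, (q S : ℝ) * f S
    linarith

theorem IsDualCertificate.exists_int {f φ : Finset (Fin n) → ℝ} {M : ℝ}
    (hφ : IsDualCertificate f M φ) (hφ0 : φ ≠ 0) :
    ∃ z : Finset (Fin n) → ℤ, z ≠ 0 ∧ IsDualCertificate f M fun S => (z S : ℝ) := by
  obtain ⟨q, hq0, hq⟩ := hφ.exists_rat hφ0
  obtain ⟨N, hN, z, hz⟩ := exists_pos_nat_mul_eq_int q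
  have hzq : (fun S => (z S : ℝ)) = (N : ℝ) • fun S => (q S : ℝ) :=
    funext fun S => by simpa using congrArg (Rat.cast : ℚ → ℝ) (hz S)
  refine ⟨z, fun hz0 => hq0 (funext fun S => ?_), hzq ▸ hq.smul (by exact_mod_cast hN)⟩
  simpa [hz0, hN.ne'] using (hz S).symm

theorem IsWeaklyModular.abs_add_compl_sub_le {f : Finset (Fin n) → ℝ} {ε : ℝ}
    (hf : IsWeaklyModular f ε) (S : Finset (Fin n)) :
    |f S + f (univ \ S) - f univ - f ∅| ≤ ε := by
  simpa [union_sdiff_of_subset (subset_univ S)] using hf S (univ \ S) disjoint_sdiff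

def collection (a b : Finset (Fin n) → ℕ) : Multiset (Finset (Fin n)) :=
  ∑ S, (Multiset.replicate (a S) S + Multiset.replicate (b S) (univ \ S))

theorem card_collection (a b : Finset (Fin n) → ℕ) :
    Multiset.card (collection a b) = ∑ S, a S + ∑ S, b S := by
  simp [collection, sum_add_distrib]

theorem card_filter_mem_collection (a b : Finset (Fin n) → ℕ) (i : Fin n) :
    Multiset.card ((collection a b).filter (i ∈ ·)) =
      ∑ S with i ∈ S, a S + ∑ S with i ∉ S, b S := by
  rw [← Multiset.countP_eq_card_filter, ← Multiset.coe_countPAddMonoidHom, collection, map_sum]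
  simp [← Multiset.coe_replicate, List.countP_replicate, sum_add_distrib, sum_filter]

theorem sum_map_collection {β : Type*} [AddCommMonoid β] (a b : Finset (Fin n) → ℕ)
    (F : Finset (Fin n) → β) :
    ((collection a b).map F).sum = ∑ S, (a S • F S + b S • F (univ \ S)) := by
  rw [← Multiset.coe_mapAddMonoidHom, collection, map_sum, ← Multiset.coe_sumAddMonoidHom, map_sum]
  simp

def IsBalancedCollection (f : Finset (Fin n) → ℝ) (ε M : ℝ) (k : ℕ)
    (G : Multiset (Finset (Fin n))) : Prop :=
  Multiset.card G = 2 * k ∧ (∀ i, Multiset.card (G.filter (i ∈ ·)) = k) ∧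
    (G.map fun S => (M - f S) + (M + f (univ \ S))).sum ≤ 2 * k * ε

theorem IsBalancedCollection.nsmul {f : Finset (Fin n) → ℝ} {ε M : ℝ} {k : ℕ}
    {G : Multiset (Finset (Fin n))} (hG : IsBalancedCollection f ε M k G) (c : ℕ) :
    IsBalancedCollection f ε M (c * k) (c • G) := by
  obtain ⟨hcard, hmem, hcost⟩ := hG
  refine ⟨by rw [Multiset.card_nsmul, hcard]; ring, fun i => ?_, ?_⟩
  · rw [Multiset.filter_nsmul, Multiset.card_nsmul, hmem]
  · rw [Multiset.map_nsmul, Multiset.sum_nsmul, nsmul_eq_mul]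
    push_cast
    nlinarith [(Nat.cast_nonneg c : (0 : ℝ) ≤ c)]

theorem isBalancedCollection_collection {f : Finset (Fin n) → ℝ} {ε M : ℝ}
    (hf : IsWeaklyModular f ε) {a b : Finset (Fin n) → ℕ} (hsum : ∑ S, a S = ∑ S, b S)
    (hmem : ∀ i, ∑ S with i ∈ S, a S = ∑ S with i ∈ S, b S)
    (hobj : M * ∑ S, ((a S : ℝ) + b S) ≤ ∑ S, ((a S : ℝ) - b S) * f S) :
    IsBalancedCollection f ε M (∑ S, b S) (collection a b) := by
  refine ⟨by rw [card_collection, hsum]; ring, fun i => ?_, ?_⟩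
  · rw [card_filter_mem_collection, hmem, sum_filter_add_sum_filter_not]
  set w := f univ + f ∅
  have hcompl : ∀ S : Finset (Fin n), univ \ (univ \ S) = S := fun S => by
    rw [sdiff_sdiff_self_left, univ_inter]
  have hcost : ∀ S, (M - f S) + (M + f (univ \ S)) ≤ 2 * M + ε + w - 2 * f S ∧
      (M - f (univ \ S)) + (M + f (univ \ (univ \ S))) ≤ 2 * M + ε - w + 2 * f S := by
    intro S
    have h := abs_le.1 (hf.abs_add_compl_sub_le S)
    rw [hcompl]
    constructor <;> linarith [h.1, h.2]
  have hsumℝ : ∑ S, (a S : ℝ) = ∑ S, (b S : ℝ) := by exact_mod_cast hsum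
  calc ((collection a b).map fun S => (M - f S) + (M + f (univ \ S))).sum
      ≤ ∑ S, ((a S : ℝ) * (2 * M + ε + w - 2 * f S) + b S * (2 * M + ε - w + 2 * f S)) := by
        rw [sum_map_collection]
        refine sum_le_sum fun S _ => ?_
        simp only [nsmul_eq_mul]
        exact add_le_add (mul_le_mul_of_nonneg_left (hcost S).1 (Nat.cast_nonneg _))
          (mul_le_mul_of_nonneg_left (hcost S).2 (Nat.cast_nonneg _))
    _ = (2 * M + ε) * ∑ S, ((a S : ℝ) + b S) + w * (∑ S, (a S : ℝ) - ∑ S, (b S : ℝ))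
          - 2 * ∑ S, ((a S : ℝ) - b S) * f S := by
        simp only [mul_sum, ← sum_sub_distrib, ← sum_add_distrib]
        exact sum_congr rfl fun S _ => by ring
    _ ≤ 2 * (∑ S, b S : ℕ) * ε := by
        rw [sum_add_distrib, hsumℝ] at hobj ⊢
        push_cast
        linarith

theorem IsDualCertificate.isBalancedCollection {f : Finset (Fin n) → ℝ} {ε M : ℝ}
    (hf : IsWeaklyModular f ε) {z : Finset (Fin n) → ℤ}
    (hz : IsDualCertificate f M fun S => (z S : ℝ)) :
    IsBalancedCollection f ε M (∑ S, (-z S).toNat)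
      (collection (fun S => (z S).toNat) fun S => (-z S).toNat) := by
  obtain ⟨hsum, hmem, hobj⟩ := hz
  have hsub : ∀ S, ((z S).toNat : ℝ) - (-z S).toNat = z S := fun S => by
    exact_mod_cast Int.toNat_sub_toNat_neg (z S)
  have hadd : ∀ S, ((z S).toNat : ℝ) + (-z S).toNat = |(z S : ℝ)| := fun S => by
    rw [← Int.cast_abs, Int.abs_eq_natAbs, ← Int.toNat_add_toNat_neg_eq_natAbs]
    push_cast
    rfl
  refine isBalancedCollection_collection hf ?_ (fun i => ?_) (by simpa only [hsub, hadd])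
  · have h : ∑ S, (((z S).toNat : ℝ) - (-z S).toNat) = 0 := by simpa only [hsub]
    rw [sum_sub_distrib, sub_eq_zero] at h
    exact_mod_cast h
  · have h : ∑ S with i ∈ S, (((z S).toNat : ℝ) - (-z S).toNat) = 0 := by
      simpa only [hsub] using hmem i
    rw [sum_sub_distrib, sub_eq_zero] at h
    exact_mod_cast h

theorem IsDualCertificate.sum_toNat_neg_pos {f : Finset (Fin n) → ℝ} {M : ℝ}
    {z : Finset (Fin n) → ℤ} (hz : IsDualCertificate f M fun S => (z S : ℝ)) (hz0 : z ≠ 0) :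
    0 < ∑ S, (-z S).toNat := by
  by_contra! h
  have hnonneg : ∀ S, 0 ≤ z S := fun S => by
    have := (sum_eq_zero_iff.1 (Nat.le_zero.1 h)) S (mem_univ S)
    omega
  have hsum : ∑ S, z S = 0 := by
    have h := hz.1
    simp only at h
    exact_mod_cast h
  exact hz0 (funext fun S => (sum_eq_zero_iff_of_nonneg fun S _ => hnonneg S).1 hsum S (mem_univ S))

theorem exists_isBalancedCollection {f : Finset (Fin n) → ℝ} {ε M : ℝ} (hf : IsWeaklyModular f ε)
    (hclosest : ∀ g, IsLinear g → ∃ S, M ≤ |f S - g S|) :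
    ∃ k, 0 < k ∧ ∃ G, IsBalancedCollection f ε M k G := by
  rcases le_or_gt M 0 with hM | hM
  · let a : Finset (Fin n) → ℕ := fun S => if S = ∅ then 1 else 0
    refine ⟨_, ?_, _, isBalancedCollection_collection hf (a := a) (b := a) rfl (fun _ => rfl) ?_⟩
    · simp [a]
    · simp only [a, sub_self, zero_mul, sum_const_zero, ← two_mul, ← mul_sum, Nat.cast_ite,
        Nat.cast_one, CharP.cast_eq_zero, sum_ite_eq', mem_univ, if_true, mul_one]
      linarith
  · obtain ⟨φ, hφ0, hφ⟩ := exists_dualCertificate hM hclosest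
    obtain ⟨z, hz0, hz⟩ := hφ.exists_int hφ0
    exact ⟨_, hz.sum_toNat_neg_pos hz0, _, hz.isBalancedCollection hf⟩

end SetFunctions

theorem canonical_collections_general {n : ℕ} (f : Finset (Fin n) → ℝ) (ε M : ℝ)
    (hf : IsWeaklyModular f ε)
    (hclosest : ∀ g : Finset (Fin n) → ℝ, IsLinear g → ∃ S : Finset (Fin n), M ≤ |f S - g S|) :
    ∃ k' : ℕ, 0 < k' ∧ ∀ c : ℕ, 0 < c →
      ∃ G : Multiset (Finset (Fin n)),
        Multiset.card G = 2 * (c * k') ∧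
        (∀ i : Fin n, Multiset.card (G.filter (fun S => i ∈ S)) = c * k') ∧
        (G.map (fun S => (M - f S) + (M + f (Finset.univ \ S)))).sum
          ≤ 2 * (c * k' : ℝ) * ε := by
  obtain ⟨k, hk, G, hG⟩ := exists_isBalancedCollection hf hclosest
  refine ⟨k, hk, fun c _ => ⟨c • G, ?_⟩⟩
  obtain ⟨hcard, hmem, hcost⟩ := hG.nsmul c
  exact ⟨hcard, hmem, by exact_mod_cast hcost⟩

/-- Complementary collections with bounded deficit/surplus: if `f` is weakly ε-modular,
`M = max_S |f(S)|`, and the zero function is a closest linear function to `f`, then there is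
some `k' > 0` such that for every positive multiple `k = c·k'` there is a multiset `𝒢` of
`2k` subsets in which every item appears in exactly `k` members, and the total deficit of
`𝒢` plus the total surplus of its complement multiset is at most `2kε`. -/
theorem canonical_collections {n : ℕ} (f : Finset (Fin n) → ℝ) (ε M : ℝ)
    (hf : IsWeaklyModular f ε)
    (hM : ∀ S : Finset (Fin n), |f S| ≤ M) (hMex : ∃ S : Finset (Fin n), |f S| = M)
    (hclosest : ∀ g : Finset (Fin n) → ℝ, IsLinear g → ∃ S : Finset (Fin n), M ≤ |f S - g S|) :
    ∃ k' : ℕ, 0 < k' ∧ ∀ c : ℕ, 0 < c →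
      ∃ G : Multiset (Finset (Fin n)),
        Multiset.card G = 2 * (c * k') ∧
        (∀ i : Fin n, Multiset.card (G.filter (fun S => i ∈ S)) = c * k') ∧
        (G.map (fun S => (M - f S) + (M + f (Finset.univ \ S)))).sum
          ≤ 2 * (c * k' : ℝ) * ε :=
  canonical_collections_general f ε M hf hclosest
end

section
/- There exists a positive integer m_0 such that for every integer m ≥ m_0 there exists a bipartite graph between a left vertex set A of size 4m and a right vertex set B of size 2m in which every left vertex has at most 5 distinct neighbors in B, and every subset S ⊆ A with |S| ≤ m has at least |S| distinct neighbors in B (and hence, by Hall's theorem, a matching of S into B saturating S). -/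
/-
Take five uniformly random permutations `σ₁, …, σ₅` of the `4m` left vertices, split the `4m`
positions into `2m` pairs (the right vertices), and join `a` to the pairs containing `σⱼ a`.
If some `S` with `|S| = s ≤ m` has fewer than `s` neighbours, they lie in a set `T` of `s - 1`
pairs, so every `σⱼ` maps `S` into the `2s - 2` positions of `T`. A union bound over `(S, T)`
leaves at most `C(4m, s) C(2m, s - 1) ((2s-2)_s (4m-s)!)⁵` bad tuples for each `s`.
Scaled by `(9/5)^s / (4m)!⁵`, these terms have a ratio in `s` that increases, so on
`[2, m]` they are largest at `s = 2` or `s = m`; both endpoints are at most `1` (the diagonal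
`s = m` by induction on `m ≥ 4`). Summing `(5/9)^s` over `s ≥ 2` gives `25/36 < 1`, so some
tuple of permutations is good.
-/

open Finset Equiv
open scoped Nat

theorem card_filter_perm_forall_mem {α : Type*} [Fintype α] [DecidableEq α] (s t : Finset α) :
    #{σ : Perm α | ∀ a ∈ s, σ a ∈ t} = (#t).descFactorial #s * (Fintype.card α - #s)! := by
  let Φ : Perm α ≃ Σ f : {a // a ∈ s} ↪ α, {a // a ∉ s} ↪ ↥(Set.range f)ᶜ :=
    (embeddingEquivOfFinite α).symm.trans <|
      (embeddingCongr (sumCompl (· ∈ s)).symm (Equiv.refl α)).trans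
        sumEmbeddingEquivSigmaEmbeddingRestricted
  rw [← Fintype.card_subtype]
  calc Fintype.card {σ : Perm α // ∀ a ∈ s, σ a ∈ t}
      = Fintype.card {x : Σ f : {a // a ∈ s} ↪ α, {a // a ∉ s} ↪ ↥(Set.range f)ᶜ //
          ∀ a, x.1 a ∈ t} :=
        Fintype.card_congr (Φ.subtypeEquiv fun _ => by rw [Subtype.forall]; exact Iff.rfl)
    _ = Fintype.card (Σ f : {f : {a // a ∈ s} ↪ α // ∀ a, f a ∈ t},
          {a // a ∉ s} ↪ ↥(Set.range f.1)ᶜ) :=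
        Fintype.card_congr <| subtypeSigmaEquiv
          (fun f : {a // a ∈ s} ↪ α => {a // a ∉ s} ↪ ↥(Set.range f)ᶜ) fun f => ∀ a, f a ∈ t
    _ = _ := by
        have hfib : ∀ f : {f : {a // a ∈ s} ↪ α // ∀ a, f a ∈ t},
            Fintype.card ({a // a ∉ s} ↪ ↥(Set.range f.1)ᶜ) = (Fintype.card α - #s)! := by
          intro f
          rw [Fintype.card_embedding_eq, Fintype.card_compl_set, Fintype.card_range,
            Fintype.card_subtype_compl, Fintype.card_coe, Nat.descFactorial_self]
        rw [Fintype.card_sigma, Finset.sum_congr rfl fun f _ => hfib f, sum_const,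
          Finset.card_univ, smul_eq_mul]
        congr 1
        calc _ = Fintype.card (↥s ↪ ↥(t : Set α)) := Fintype.card_congr (Equiv.codRestrict _ _)
          _ = _ := by simp

section PermNeighbors

variable {ι α β : Type*} [Fintype ι] [DecidableEq β]

def permNeighbors (q : α → β) (F : ι → Perm α) (a : α) : Finset β :=
  univ.image fun j => q (F j a)

lemma card_permNeighbors_le (q : α → β) (F : ι → Perm α) (a : α) :
    #(permNeighbors q F a) ≤ Fintype.card ι :=
  card_image_le

variable [DecidableEq ι] [Fintype α] [DecidableEq α] {q : α → β} {c : ℕ}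

lemma card_filter_forall_mem_le (hq : ∀ b, #{a | q a = b} ≤ c) (S : Finset α)
    (T : Finset β) :
    #{F : ι → Perm α | ∀ j, ∀ a ∈ S, q (F j a) ∈ T} ≤
      ((c * #T).descFactorial #S * (Fintype.card α - #S)!) ^ Fintype.card ι := by
  have hU : #{a | q a ∈ T} ≤ c * #T :=
    card_le_mul_card_image_of_maps_to (fun a ha => (mem_filter.mp ha).2) c
      fun b _ => (card_le_card fun a => by simp +contextual).trans (hq b)
  have hpi : ({F : ι → Perm α | ∀ j, ∀ a ∈ S, q (F j a) ∈ T} : Finset _) =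
      Fintype.piFinset fun _ => {σ : Perm α | ∀ a ∈ S, σ a ∈ ({a | q a ∈ T} : Finset α)} := by
    ext F
    simp
  rw [hpi, Fintype.card_piFinset, prod_const, Finset.card_univ, card_filter_perm_forall_mem]
  gcongr

variable [Fintype β] in
lemma card_filter_not_expanding_le (hq : ∀ b, #{a | q a = b} ≤ c) {k : ℕ}
    (hk : k ≤ Fintype.card β + 1) :
    #{F : ι → Perm α | ∃ S : Finset α, #S ≤ k ∧ #(S.biUnion (permNeighbors q F)) < #S} ≤
      ∑ s ∈ Icc 1 k, (Fintype.card α).choose s * (Fintype.card β).choose (s - 1) *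
        ((c * (s - 1)).descFactorial s * (Fintype.card α - s)!) ^ Fintype.card ι := by
  let bad (S : Finset α) (T : Finset β) : Finset (ι → Perm α) :=
    {F | ∀ j, ∀ a ∈ S, q (F j a) ∈ T}
  have hcover : ({F : ι → Perm α | ∃ S : Finset α, #S ≤ k ∧
      #(S.biUnion (permNeighbors q F)) < #S} : Finset _) ⊆
      (Icc 1 k).biUnion fun s =>
        (powersetCard s univ ×ˢ powersetCard (s - 1) univ).biUnion fun p => bad p.1 p.2 := by
    intro F hF
    obtain ⟨S, hSk, hSN⟩ := (mem_filter.mp hF).2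
    obtain ⟨T, hNT, -, hT⟩ := exists_subsuperset_card_eq
      (subset_univ (S.biUnion (permNeighbors q F))) (Nat.le_sub_one_of_lt hSN)
      (by rw [Finset.card_univ]; omega)
    simp only [mem_biUnion, mem_product, mem_powersetCard, mem_Icc]
    refine ⟨#S, ⟨by omega, hSk⟩, (S, T), ⟨⟨subset_univ _, rfl⟩, subset_univ _, hT⟩, ?_⟩
    simp only [bad, mem_filter, mem_univ, true_and]
    exact fun j a ha => hNT (mem_biUnion.mpr ⟨a, ha, mem_image.mpr ⟨j, mem_univ _, rfl⟩⟩)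
  refine (card_le_card hcover).trans (card_biUnion_le.trans (sum_le_sum fun s _ => ?_))
  refine (card_biUnion_le_card_mul _ _
    (((c * (s - 1)).descFactorial s * (Fintype.card α - s)!) ^ Fintype.card ι)
    fun p hp => ?_).trans_eq ?_
  · simp only [mem_product, mem_powersetCard] at hp
    rw [← hp.2.2, ← hp.1.2]
    exact card_filter_forall_mem_le hq p.1 p.2
  · simp [card_powersetCard]

end PermNeighbors

theorem le_max_of_eq_mul_of_monotoneOn {R : Type*} [Semiring R] [LinearOrder R]
    [IsOrderedRing R] {f r : ℕ → R} {a b : ℕ} (hf : ∀ i, 0 ≤ f i)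
    (hfr : ∀ i ∈ Set.Ico a b, f (i + 1) = f i * r i) (hr : MonotoneOn r (Set.Ico a b))
    {i : ℕ} (hi : i ∈ Set.Icc a b) : f i ≤ max (f a) (f b) := by
  obtain ⟨hai, hib⟩ := hi
  by_cases h : ∃ j ∈ Set.Ico i b, r j ≤ 1
  · obtain ⟨j, ⟨hij, hjb⟩, hrj⟩ := h
    have : AntitoneOn f (Set.Icc a i) := antitoneOn_of_succ_le Set.ordConnected_Icc
      fun k _ hk hk1 => by
        rw [Order.succ_eq_add_one] at hk1 ⊢
        have hk' : k ∈ Set.Ico a b := ⟨hk.1, by have := hk1.2; omega⟩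
        rw [hfr k hk']
        exact mul_le_of_le_one_right (hf k)
          ((hr hk' ⟨by omega, hjb⟩ (by have := hk1.2; omega)).trans hrj)
    exact le_max_of_le_left (this ⟨le_rfl, hai⟩ ⟨hai, le_rfl⟩ hai)
  · simp only [not_exists, not_and, not_le] at h
    have : MonotoneOn f (Set.Icc i b) := monotoneOn_of_le_succ Set.ordConnected_Icc
      fun k _ hk hk1 => by
        rw [Order.succ_eq_add_one] at hk1 ⊢
        have hk' : k ∈ Set.Ico a b := ⟨by have := hk.1; omega, by have := hk1.2; omega⟩
        rw [hfr k hk']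
        exact le_mul_of_one_le_right (hf k) (h k ⟨hk.1, hk'.2⟩).le
    exact le_max_of_le_right (this ⟨le_rfl, hib⟩ ⟨hib, le_rfl⟩ hib)

def expanderTerm (m s : ℕ) : ℕ :=
  (4 * m).choose s * (2 * m).choose (s - 1) * ((2 * (s - 1)).descFactorial s * (4 * m - s)!) ^ 5

noncomputable def scaledTerm (m s : ℕ) : ℚ := (9 / 5) ^ s * expanderTerm m s / ((4 * m)! : ℚ) ^ 5

-- Writing `s = i + 2` and `m = i + j + 2` leaves no truncated subtraction inside a factorial.
lemma expanderTerm_add_add_mul (i j : ℕ) :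
    expanderTerm (i + j + 2) (i + 2) *
      ((i + 2)! * (i + 1)! * (i + 2 * j + 3)! * (i !) ^ 5 * ((4 * i + 4 * j + 8)!) ^ 4) =
    (2 * i + 2 * j + 4)! * ((2 * i + 2)!) ^ 5 * ((3 * i + 4 * j + 6)!) ^ 4 *
      ((4 * i + 4 * j + 8)!) ^ 5 := by
  have hC := Nat.add_choose_mul_factorial_mul_factorial (3 * i + 4 * j + 6) (i + 2)
  have hC' := Nat.add_choose_mul_factorial_mul_factorial (i + 2 * j + 3) (i + 1)
  have hD := Nat.factorial_mul_descFactorial (Nat.le_add_left (i + 2) i)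
  rw [Nat.add_sub_cancel] at hD
  rw [expanderTerm, show 4 * (i + j + 2) = 3 * i + 4 * j + 6 + (i + 2) by ring,
    show 4 * i + 4 * j + 8 = 3 * i + 4 * j + 6 + (i + 2) by ring,
    show 2 * (i + j + 2) = i + 2 * j + 3 + (i + 1) by ring,
    show 2 * i + 2 * j + 4 = i + 2 * j + 3 + (i + 1) by ring,
    show 2 * (i + 2 - 1) = i + (i + 2) by omega, show 2 * i + 2 = i + (i + 2) by ring,
    Nat.add_sub_cancel, show i + 2 - 1 = i + 1 by omega, ← hC, ← hC', ← hD]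
  ring

lemma scaledTerm_add_add (i j : ℕ) :
    scaledTerm (i + j + 2) (i + 2) = (9 / 5) ^ (i + 2) *
      ((2 * i + 2 * j + 4)! * ((2 * i + 2)!) ^ 5 * ((3 * i + 4 * j + 6)!) ^ 4 : ℕ) /
      ((i + 2)! * (i + 1)! * (i + 2 * j + 3)! * (i !) ^ 5 * ((4 * i + 4 * j + 8)!) ^ 4 : ℕ) := by
  rw [scaledTerm, show 4 * (i + j + 2) = 4 * i + 4 * j + 8 by ring, mul_div_assoc, mul_div_assoc]
  congr 1
  rw [div_eq_div_iff (by positivity) (by positivity)]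
  exact_mod_cast expanderTerm_add_add_mul i j

lemma scaledTerm_succ_left {m : ℕ} (hm : 2 ≤ m) :
    scaledTerm (m + 1) m = scaledTerm m m *
      ((2 * m + 2) * (2 * m + 1) * ((3 * m + 4) * (3 * m + 3) * (3 * m + 2) * (3 * m + 1)) ^ 4 /
        ((m + 3) * (m + 2) * ((4 * m + 4) * (4 * m + 3) * (4 * m + 2) * (4 * m + 1)) ^ 4)) := by
  obtain ⟨i, rfl⟩ := Nat.exists_eq_add_of_le' hm
  have h1 := scaledTerm_add_add i 1
  have h0 := scaledTerm_add_add i 0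
  simp only [mul_zero, add_zero, mul_one] at h0 h1
  rw [show i + 2 + 1 = i + 1 + 2 by ring, h1, h0]
  simp only [Nat.factorial_succ]
  push_cast
  field_simp
  ring

lemma expanderTerm_succ_mul {m s : ℕ} (hs : 1 ≤ s) (hsm : s < 4 * m) :
    expanderTerm m (s + 1) * ((s + 1) * s * ((s - 1) * (4 * m - s)) ^ 5) =
      expanderTerm m s * ((4 * m - s) * (2 * m - (s - 1)) * (2 * s * (2 * s - 1)) ^ 5) := by
  obtain ⟨k, rfl⟩ := Nat.exists_eq_add_of_le' hs
  have hC := Nat.choose_succ_right_eq (4 * m) (k + 1)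
  have hC' := Nat.choose_succ_right_eq (2 * m) k
  have hD : (2 * k + 2).descFactorial (k + 2) * k =
      (2 * k + 2) * (2 * k + 1) * (2 * k).descFactorial (k + 1) := by
    rw [Nat.succ_descFactorial_succ, Nat.succ_descFactorial_succ, Nat.descFactorial_succ,
      show 2 * k - k = k by omega]
    ring
  have hF : (4 * m - (k + 2))! * (4 * m - (k + 1)) = (4 * m - (k + 1))! := by
    rw [show 4 * m - (k + 1) = 4 * m - (k + 2) + 1 by omega, Nat.factorial_succ]
    ring
  rw [expanderTerm, expanderTerm, show k + 1 + 1 - 1 = k + 1 by omega, Nat.add_sub_cancel,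
    show 2 * (k + 1) = 2 * k + 2 by ring, show 2 * k + 2 - 1 = 2 * k + 1 by omega,
    show k + 1 + 1 = k + 2 by ring]
  calc _ = ((4 * m).choose (k + 2) * (k + 2)) * ((2 * m).choose (k + 1) * (k + 1)) *
        ((2 * k + 2).descFactorial (k + 2) * k * ((4 * m - (k + 2))! * (4 * m - (k + 1)))) ^ 5 :=
        by ring
    _ = _ := by rw [hC, hC', hD, hF]; ring

noncomputable def stepRatio (m s : ℕ) : ℚ :=
  9 * (2 * s * (2 * s - 1)) ^ 5 * (2 * m - s + 1) /
    (5 * (s + 1) * s * (s - 1) ^ 5 * (4 * m - s) ^ 4)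

lemma scaledTerm_succ {m s : ℕ} (hs : 2 ≤ s) (hsm : s ≤ 2 * m) :
    scaledTerm m (s + 1) = scaledTerm m s * stepRatio m s := by
  have key := congrArg (Nat.cast : ℕ → ℚ)
    (expanderTerm_succ_mul (m := m) (by omega : 1 ≤ s) (by omega))
  push_cast [Nat.cast_sub (by omega : 1 ≤ s), Nat.cast_sub (by omega : s ≤ 4 * m),
    Nat.cast_sub (by omega : s - 1 ≤ 2 * m), Nat.cast_sub (by omega : 1 ≤ 2 * s)] at key
  have h1 : (1 : ℚ) < s := by exact_mod_cast hs
  have h2 : (s : ℚ) < 4 * m := by exact_mod_cast (by omega : s < 4 * m)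
  have hB : ((s : ℚ) + 1) * s * ((s - 1) * (4 * m - s)) ^ 5 ≠ 0 := by
    have : (0 : ℚ) < (s - 1) * (4 * m - s) := mul_pos (by linarith) (by linarith)
    positivity
  rw [scaledTerm, scaledTerm, stepRatio, eq_div_of_mul_eq hB key]
  field_simp
  ring

lemma stepRatio_le_succ {m s : ℕ} (hs : 2 ≤ s) (hsm : s + 2 ≤ m) :
    stepRatio m s ≤ stepRatio m (s + 1) := by
  obtain ⟨a, rfl⟩ := Nat.exists_eq_add_of_le' hs
  obtain ⟨b, rfl⟩ : ∃ b, m = a + b + 4 := ⟨m - a - 4, by omega⟩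
  unfold stepRatio
  push_cast
  -- after the shift `s = a + 2`, `m = a + b + 4` every coefficient of the difference is positive
  rw [div_le_div_iff₀ (by ring_nf; positivity) (by ring_nf; positivity), ← sub_nonneg]
  ring_nf
  positivity

lemma scaledTerm_nonneg (m s : ℕ) : 0 ≤ scaledTerm m s := by
  unfold scaledTerm
  positivity

lemma scaledTerm_succ_self_le {m : ℕ} (hm : 4 ≤ m) :
    scaledTerm (m + 1) (m + 1) ≤ scaledTerm m m := by
  rw [scaledTerm_succ (by omega) (by omega), scaledTerm_succ_left (by omega), mul_assoc]
  refine mul_le_of_le_one_right (scaledTerm_nonneg m m) ?_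
  obtain ⟨k, rfl⟩ := Nat.exists_eq_add_of_le' hm
  unfold stepRatio
  push_cast
  rw [div_mul_div_comm, div_le_one (by ring_nf; positivity), ← sub_nonneg]
  ring_nf
  positivity

lemma scaledTerm_two_le_one {m : ℕ} (hm : 2 ≤ m) : scaledTerm m 2 ≤ 1 := by
  obtain ⟨j, rfl⟩ := Nat.exists_eq_add_of_le' hm
  have h := scaledTerm_add_add 0 j
  simp only [mul_zero, zero_add] at h
  have hclosed :
      scaledTerm (j + 2) 2 = 1296 * (2 * j + 4) / (25 * ((4 * j + 8) * (4 * j + 7)) ^ 4) := by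
    rw [h]
    simp only [Nat.factorial_succ]
    push_cast
    field_simp
    ring
  rw [hclosed, div_le_one (by positivity), ← sub_nonneg]
  ring_nf
  positivity

lemma scaledTerm_four_four_le_one : scaledTerm 4 4 ≤ 1 := by
  have h := scaledTerm_add_add 2 0
  norm_num [Nat.factorial] at h
  rw [h]
  norm_num

lemma scaledTerm_self_le_one {m : ℕ} (hm : 4 ≤ m) : scaledTerm m m ≤ 1 := by
  induction m, hm using Nat.le_induction with
  | base => exact scaledTerm_four_four_le_one
  | succ m hm ih => exact (scaledTerm_succ_self_le hm).trans ih

lemma scaledTerm_le_one {m s : ℕ} (hm : 4 ≤ m) (hs : s ∈ Set.Icc 2 m) : scaledTerm m s ≤ 1 := by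
  refine (le_max_of_eq_mul_of_monotoneOn (scaledTerm_nonneg m)
    (fun s hs => scaledTerm_succ hs.1 (by have := hs.2; omega))
    (monotoneOn_of_le_succ Set.ordConnected_Ico fun s _ hs hs1 => ?_) hs).trans
    (max_le (scaledTerm_two_le_one (by omega)) (scaledTerm_self_le_one hm))
  simp only [Set.mem_Ico, Order.succ_eq_add_one] at hs hs1
  exact stepRatio_le_succ hs.1 (by omega)

lemma sum_expanderTerm_lt {m : ℕ} (hm : 4 ≤ m) :
    ∑ s ∈ Icc 1 m, expanderTerm m s < ((4 * m)!) ^ 5 := by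
  have hsub : Icc 2 m ⊆ Icc 1 m := Icc_subset_Icc_left (by norm_num)
  rw [← sum_subset hsub fun s hs hs' => by
    obtain rfl : s = 1 := by simp only [mem_Icc] at hs hs'; omega
    simp [expanderTerm]]
  have hN : (0 : ℚ) < ((4 * m)! : ℚ) ^ 5 := by positivity
  have hterm : ∀ s ∈ Icc 2 m, (expanderTerm m s : ℚ) ≤ (5 / 9) ^ s * ((4 * m)! : ℚ) ^ 5 := by
    intro s hs
    have h := scaledTerm_le_one hm (by simpa using hs)
    rw [scaledTerm, div_le_one hN] at h
    calc (expanderTerm m s : ℚ) = (5 / 9) ^ s * ((9 / 5) ^ s * expanderTerm m s) := by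
          rw [← mul_assoc, ← mul_pow]; norm_num
      _ ≤ (5 / 9) ^ s * ((4 * m)! : ℚ) ^ 5 := by gcongr
  have hgeom : ∑ s ∈ Icc 2 m, (5 / 9 : ℚ) ^ s ≤ 25 / 36 := by
    rw [← Ico_add_one_right_eq_Icc]
    refine (geom_sum_Ico_le_of_lt_one (by norm_num) (by norm_num)).trans_eq (by norm_num)
  have : (∑ s ∈ Icc 2 m, expanderTerm m s : ℚ) < ((4 * m)! : ℚ) ^ 5 :=
    calc _ ≤ ∑ s ∈ Icc 2 m, (5 / 9 : ℚ) ^ s * ((4 * m)! : ℚ) ^ 5 := sum_le_sum hterm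
      _ = (∑ s ∈ Icc 2 m, (5 / 9 : ℚ) ^ s) * ((4 * m)! : ℚ) ^ 5 := by rw [sum_mul]
      _ ≤ 25 / 36 * ((4 * m)! : ℚ) ^ 5 := by gcongr
      _ < ((4 * m)! : ℚ) ^ 5 := by linarith
  exact_mod_cast this

def halve (m : ℕ) (x : Fin (4 * m)) : Fin (2 * m) := ⟨x / 2, by omega⟩

lemma card_filter_halve_eq_le (m : ℕ) (b : Fin (2 * m)) : #{x | halve m x = b} ≤ 2 := by
  refine (card_le_card (t := {⟨2 * b, by omega⟩, ⟨2 * b + 1, by omega⟩}) fun x hx => ?_).trans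
    card_le_two
  simp only [mem_filter, mem_univ, true_and, halve, Fin.ext_iff] at hx
  simp only [mem_insert, mem_singleton, Fin.ext_iff]
  omega

/-- Existence of (1/4, 5, 1/2)-expanders: for all sufficiently large `m` there is a
bipartite graph between a left side of size `4m` and a right side of size `2m`, given by
a neighborhood map `nbr`, in which every left vertex has at most 5 neighbors and every
set `S` of at most `m` left vertices has at least `|S|` distinct neighbors. -/
theorem exists_quarter_five_half_expanders :
    ∃ m₀ : ℕ, 0 < m₀ ∧ ∀ m : ℕ, m₀ ≤ m →
      ∃ nbr : Fin (4 * m) → Finset (Fin (2 * m)),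
        (∀ a : Fin (4 * m), (nbr a).card ≤ 5) ∧
        ∀ S : Finset (Fin (4 * m)), S.card ≤ m → S.card ≤ (S.biUnion nbr).card := by
  refine ⟨4, by norm_num, fun m hm => ?_⟩
  obtain ⟨F, hF⟩ : ∃ F : Fin 5 → Perm (Fin (4 * m)),
      ∀ S : Finset (Fin (4 * m)), #S ≤ m → #S ≤ #(S.biUnion (permNeighbors (halve m) F)) := by
    by_contra! h
    have hbad := card_filter_not_expanding_le (ι := Fin 5) (card_filter_halve_eq_le m)
      (k := m) (by simp only [Fintype.card_fin]; omega)
    rw [filter_true_of_mem fun F _ => h F, Finset.card_univ, Fintype.card_fun,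
      Fintype.card_perm] at hbad
    simp only [Fintype.card_fin] at hbad
    exact (sum_expanderTerm_lt hm).not_ge hbad
  exact ⟨permNeighbors (halve m) F, fun a => card_permNeighbors_le _ F a, hF⟩
end

section
/- Let v_1,…,v_n ∈ {−1,+1}^n be pairwise orthogonal vectors (a Hadamard basis of ℝ^n), with S_i = {j : v_i(j) = +1}. Let h and g be linear set functions over n items, and let Δ ≥ 0 and C ≥ 0 be such that |(h(S_i) − h(U∖S_i)) − (g(S_i) − g(U∖S_i))| ≤ CΔ for every i ∈ {1,…,n}, |h(∅) − g(∅)| ≤ CΔ, and |h(U) − g(U)| ≤ CΔ. Then for every set S ⊆ U, |h(S) − g(S)| ≤ CΔ·(3 + √(min{|S|, n−|S|})). -/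
open Finset

/-- The set of coordinates where the vector `v i ∈ {±1}ⁿ` equals +1. -/
noncomputable def posSet {n : ℕ} (v : Fin n → Fin n → ℝ) (i : Fin n) : Finset (Fin n) :=
  Finset.univ.filter (fun j => v i j = 1)

/-! Put `f = h - g`, a linear set function `f S = c₀ + ∑_{j ∈ S} c j`. The hypotheses on the
basis say `|⟨vᵢ, c⟩| ≤ CΔ` for every `i`. Since the `vᵢ / √n` form an orthonormal basis,
`n · ∑_{j ∈ S} c j = ∑ᵢ ⟨vᵢ, 1_S⟩ ⟨vᵢ, c⟩`, and Cauchy–Schwarz together with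
`∑ᵢ ⟨vᵢ, 1_S⟩² = n |S|` gives `|∑_{j ∈ S} c j| ≤ CΔ √|S|`. Now `f S = f ∅ + ∑_{S} c` and
`f S = f U - ∑_{U ∖ S} c` bound `|f S|` by `CΔ (1 + √|S|)` and by `CΔ (1 + √(n - |S|))`. -/

open Matrix

section HadamardMatrix

variable {ι : Type*} [Fintype ι] [DecidableEq ι]

theorem transpose_mul_self_eq_smul_one {K : Type*} [Field K] {A : Matrix ι ι K} {c : K}
    (hc : c ≠ 0) (h : A * Aᵀ = c • 1) : Aᵀ * A = c • 1 := by
  have hinv : (c⁻¹ • Aᵀ) * A = 1 :=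
    mul_eq_one_comm.mp (by rw [Matrix.mul_smul, h, smul_smul, inv_mul_cancel₀ hc, one_smul])
  calc Aᵀ * A = c • ((c⁻¹ • Aᵀ) * A) := by rw [smul_mul, smul_smul, mul_inv_cancel₀ hc, one_smul]
    _ = c • 1 := by rw [hinv]

theorem of_mul_transpose_eq_card_smul_one {v : ι → ι → ℝ}
    (hpm : ∀ i j, v i j = 1 ∨ v i j = -1) (horth : ∀ i i', i ≠ i' → ∑ j, v i j * v i' j = 0) :
    of v * (of v)ᵀ = (Fintype.card ι : ℝ) • 1 := by
  ext i i'
  rcases eq_or_ne i i' with rfl | hne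
  · have hsq : ∀ j, v i j * v i j = 1 := fun j => by rcases hpm i j with h | h <;> simp [h]
    simp [mul_apply, hsq]
  · simp [mul_apply, horth i i' hne, hne]

theorem mulVec_dotProduct_mulVec {R : Type*} [CommRing R] {V : Matrix ι ι R} {c : R}
    (hV : Vᵀ * V = c • 1) (u w : ι → R) : V *ᵥ u ⬝ᵥ V *ᵥ w = c * (u ⬝ᵥ w) := by
  rw [dotProduct_mulVec, ← vecMul_transpose, vecMul_vecMul, hV, vecMul_smul, vecMul_one,
    smul_dotProduct, smul_eq_mul]

theorem abs_sum_le_mul_sqrt_card [Nonempty ι] {V : Matrix ι ι ℝ}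
    (hV : Vᵀ * V = (Fintype.card ι : ℝ) • 1) {d : ι → ℝ} {B : ℝ} (hB : ∀ i, |(V *ᵥ d) i| ≤ B)
    (S : Finset ι) : |∑ j ∈ S, d j| ≤ B * √(#S : ℝ) := by
  set n : ℝ := (Fintype.card ι : ℝ)
  have hB₀ : 0 ≤ B := (abs_nonneg _).trans (hB (Classical.arbitrary ι))
  set χ : ι → ℝ := fun j => if j ∈ S then 1 else 0
  have hχd : χ ⬝ᵥ d = ∑ j ∈ S, d j := by simp [χ, dotProduct, ite_mul]
  have hχχ : χ ⬝ᵥ χ = #S := by simp [χ, dotProduct]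
  have hcs := sum_mul_sq_le_sq_mul_sq univ (V *ᵥ χ) (V *ᵥ d)
  have hdd : ∑ i, (V *ᵥ d) i ^ 2 ≤ n * B ^ 2 := by
    calc ∑ i, (V *ᵥ d) i ^ 2 ≤ ∑ _i : ι, B ^ 2 :=
          sum_le_sum fun i _ => sq_le_sq' (abs_le.mp (hB i)).1 (abs_le.mp (hB i)).2
      _ = n * B ^ 2 := by simp [n]
  have hχd' : ∑ i, (V *ᵥ χ) i * (V *ᵥ d) i = n * ∑ j ∈ S, d j := by
    rw [← hχd, ← mulVec_dotProduct_mulVec hV]; rfl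
  have hχχ' : ∑ i, (V *ᵥ χ) i ^ 2 = n * #S := by
    rw [← hχχ, ← mulVec_dotProduct_mulVec hV]; simp [dotProduct, sq]
  rw [hχd', hχχ'] at hcs
  have hsq : (∑ j ∈ S, d j) ^ 2 ≤ B ^ 2 * #S := by
    have : n ^ 2 * (∑ j ∈ S, d j) ^ 2 ≤ n ^ 2 * (B ^ 2 * #S) := by
      nlinarith [mul_le_mul_of_nonneg_left hdd (by positivity : (0:ℝ) ≤ n * #S)]
    exact le_of_mul_le_mul_left this (by positivity)
  calc |∑ j ∈ S, d j| ≤ √(B ^ 2 * #S) := Real.abs_le_sqrt hsq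
    _ = B * √(#S : ℝ) := by rw [Real.sqrt_mul (sq_nonneg B), Real.sqrt_sq hB₀]

end HadamardMatrix

theorem IsLinear.sub {n : ℕ} {f g : Finset (Fin n) → ℝ} (hf : IsLinear f) (hg : IsLinear g) :
    IsLinear (f - g) := by
  obtain ⟨a₀, a, ha⟩ := hf
  obtain ⟨b₀, b, hb⟩ := hg
  exact ⟨a₀ - b₀, a - b, fun S => by simp [ha, hb, sum_sub_distrib]; ring⟩

theorem sub_apply_compl_posSet {n : ℕ} {v : Fin n → Fin n → ℝ}
    (hpm : ∀ i j, v i j = 1 ∨ v i j = -1) {f : Finset (Fin n) → ℝ} {c₀ : ℝ} {c : Fin n → ℝ}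
    (hf : ∀ S, f S = c₀ + ∑ j ∈ S, c j) (i : Fin n) :
    f (posSet v i) - f (univ \ posSet v i) = (of v *ᵥ c) i := by
  have hpos : ∑ j ∈ posSet v i, v i j * c j = ∑ j ∈ posSet v i, c j :=
    sum_congr rfl fun j hj => by rw [(mem_filter.mp hj).2, one_mul]
  have hneg : ∑ j ∈ univ \ posSet v i, v i j * c j = -∑ j ∈ univ \ posSet v i, c j := by
    rw [← sum_neg_distrib]
    refine sum_congr rfl fun j hj => ?_
    rw [(hpm i j).resolve_left (by simpa [posSet] using hj), neg_one_mul]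
  simp only [mulVec, dotProduct, of_apply]
  rw [hf, hf, ← sum_sdiff (subset_univ (posSet v i)), hpos, hneg]
  ring

theorem abs_apply_le_add_mul_sqrt_min {ι : Type*} [Fintype ι] [DecidableEq ι]
    {f : Finset ι → ℝ} {c₀ : ℝ} {c : ι → ℝ} (hf : ∀ S, f S = c₀ + ∑ j ∈ S, c j) {A B : ℝ}
    (hempty : |f ∅| ≤ A) (huniv : |f univ| ≤ A) (hc : ∀ T, |∑ j ∈ T, c j| ≤ B * √(#T : ℝ))
    (S : Finset ι) : |f S| ≤ A + B * √(min (#S : ℝ) #Sᶜ) := by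
  have hS : f S = f ∅ + ∑ j ∈ S, c j := by simp [hf]
  have hSc : f S = f univ - ∑ j ∈ Sᶜ, c j := by
    rw [hf, hf, ← sum_compl_add_sum S]; ring
  rcases min_choice (#S : ℝ) #Sᶜ with hmin | hmin <;> rw [hmin]
  · exact hS ▸ (abs_add_le _ _).trans (add_le_add hempty (hc S))
  · exact hSc ▸ (abs_sub _ _).trans (add_le_add huniv (hc Sᶜ))

/-- If two linear set functions `h` and `g` are `CΔ`-close on the differences along the
Hadamard basis vectors as well as on `∅` and `U`, then they are
`CΔ(3 + √(min(|S|, n−|S|)))`-close on every set `S`. -/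
theorem hadamard_closeness {n : ℕ} (hn : 0 < n)
    (v : Fin n → Fin n → ℝ)
    (hpm : ∀ i j : Fin n, v i j = 1 ∨ v i j = -1)
    (horth : ∀ i i' : Fin n, i ≠ i' → ∑ j : Fin n, v i j * v i' j = 0)
    (h g : Finset (Fin n) → ℝ) (hh : IsLinear h) (hg : IsLinear g)
    (Δ C : ℝ) (hΔ : 0 ≤ Δ) (hC : 0 ≤ C)
    (hbasis : ∀ i : Fin n,
      |(h (posSet v i) - h (Finset.univ \ posSet v i)) -
        (g (posSet v i) - g (Finset.univ \ posSet v i))| ≤ C * Δ)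
    (hempty : |h ∅ - g ∅| ≤ C * Δ)
    (hfull : |h Finset.univ - g Finset.univ| ≤ C * Δ) :
    ∀ S : Finset (Fin n),
      |h S - g S| ≤ C * Δ * (3 + Real.sqrt (min S.card (n - S.card))) := by
  have : Nonempty (Fin n) := ⟨⟨0, hn⟩⟩
  obtain ⟨c₀, c, hf⟩ := hh.sub hg
  have hV : (of v)ᵀ * of v = (Fintype.card (Fin n) : ℝ) • 1 :=
    transpose_mul_self_eq_smul_one (by positivity) (of_mul_transpose_eq_card_smul_one hpm horth)
  have hB : ∀ i, |(of v *ᵥ c) i| ≤ C * Δ := fun i => by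
    rw [← sub_apply_compl_posSet hpm hf]
    convert hbasis i using 2
    simp only [Pi.sub_apply]
    ring
  intro S
  have hcard : (#Sᶜ : ℝ) = n - #S := by
    rw [card_compl, Fintype.card_fin, Nat.cast_sub (by simpa using card_le_univ S)]
  have hCΔ : 0 ≤ C * Δ := mul_nonneg hC hΔ
  calc |h S - g S| ≤ C * Δ + C * Δ * √(min (#S : ℝ) #Sᶜ) :=
        abs_apply_le_add_mul_sqrt_min hf hempty hfull (abs_sum_le_mul_sqrt_card hV hB) S
    _ ≤ C * Δ * (3 + √(min (#S : ℝ) (n - #S))) := by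
        rw [hcard]; nlinarith [Real.sqrt_nonneg (min (#S : ℝ) (n - #S))]
end

section
/- There exists a universal constant C > 0 such that the following holds. Let n be a positive integer, let v_1,…,v_n ∈ {−1,+1}^n be pairwise orthogonal vectors with v_1 the all-ones vector, and set S_i = {j : v_i(j) = +1}. Let Δ ≥ 0 and let f be a Δ-linear set function over n items. Define the linear set function h by h(S) = f(∅) + ∑_{j∈S} h_j, where h_j = (1/n) ∑_{i=1}^n v_i(j)·(f(S_i) − f(U∖S_i)). Then for every set S ⊆ U, |h(S) − f(S)| ≤ CΔ·(1 + √(min{|S|, n−|S|})); in particular h is CΔ√n-close to f. (Note that h is computed from the 2n+1 values f(∅) and f(S_i), f(U∖S_i) for i = 1,…,n, i.e., from O(n) nonadaptive value queries to f.) -/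
open Finset

open Matrix

/-!
The estimator is linear in `f` and, because the columns of a Hadamard matrix are orthogonal as
well, exact on linear functions. Writing `f = g + η` with `g` linear and `|η| ≤ Δ`, the error at
`S` is therefore that of `η`, namely `η(∅) − η(S) + (1/n) ∑ᵢ aᵢ eᵢ` with `aᵢ = ∑_{j∈S} vᵢ(j)` and
`|eᵢ| ≤ 2Δ`. Here `a₁ = |S|`, and since every other row sums to zero, `aᵢ = −∑_{j∉S} vᵢ(j)` for
`i ≠ 1`; the Parseval identity `∑ᵢ aᵢ² = n|S|` (and its analogue for `U∖S`) together with
Cauchy–Schwarz gives `∑_{i≠1} |aᵢ| ≤ n √(min(|S|, n−|S|))`.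
-/

theorem Matrix.transpose_mul_eq_smul_one_of_mul_transpose {ι K : Type*} [Fintype ι]
    [DecidableEq ι] [Field K] {M : Matrix ι ι K} {r : K} (hr : r ≠ 0) (h : M * Mᵀ = r • 1) :
    Mᵀ * M = r • 1 := by
  have hinv : M * (r⁻¹ • Mᵀ) = 1 := by
    rw [Matrix.mul_smul, h, smul_smul, inv_mul_cancel₀ hr, one_smul]
  have hinv' : r⁻¹ • (Mᵀ * M) = 1 := by
    rw [← Matrix.smul_mul]
    exact mul_eq_one_comm.mp hinv
  rw [← hinv', smul_smul, mul_inv_cancel₀ hr, one_smul]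

section SignMatrix

variable {ι κ : Type*} [Fintype ι] {v : ι → κ → ℝ}

theorem sum_sq_sum_eq_mul_card [DecidableEq κ] {r : ℝ}
    (hcol : ∀ j k, ∑ i, v i j * v i k = if j = k then r else 0) (T : Finset κ) :
    ∑ i, (∑ j ∈ T, v i j) ^ 2 = r * #T := by
  simp_rw [sq, sum_mul_sum]
  rw [sum_comm]
  have hrow : ∀ j ∈ T, ∑ i, ∑ k ∈ T, v i j * v i k = r := fun j hj => by
    rw [sum_comm]
    simp [hcol, hj]
  rw [sum_congr rfl hrow, sum_const, nsmul_eq_mul, mul_comm]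

variable {w : ι → ι → ℝ}

theorem sum_eq_zero_of_orthogonal_ones {i₀ : ι} (hone : ∀ j, w i₀ j = 1)
    (horth : ∀ i i', i ≠ i' → ∑ j, w i j * w i' j = 0) {i : ι} (hi : i ≠ i₀) :
    ∑ j, w i j = 0 := by
  simpa [hone] using horth i i₀ hi

variable [DecidableEq ι]

theorem sum_mul_eq_ite_of_orthogonal_rows (hsign : ∀ i j, w i j = 1 ∨ w i j = -1)
    (horth : ∀ i i', i ≠ i' → ∑ j, w i j * w i' j = 0) (j k : ι) :
    ∑ i, w i j * w i k = if j = k then (Fintype.card ι : ℝ) else 0 := by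
  have hcard : (Fintype.card ι : ℝ) ≠ 0 := by
    have := Fintype.card_pos_iff.mpr ⟨j⟩
    positivity
  have hsq : ∀ i j, w i j * w i j = 1 := fun i j => by
    rcases hsign i j with h | h <;> simp [h]
  have hrows : Matrix.of w * (Matrix.of w)ᵀ = (Fintype.card ι : ℝ) • 1 := by
    ext i i'
    rw [Matrix.mul_apply, Matrix.smul_apply, Matrix.one_apply]
    split_ifs with h
    · simp [h, hsq]
    · simpa using horth i i' h
  simpa [Matrix.mul_apply, Matrix.one_apply] using
    congrFun₂ (Matrix.transpose_mul_eq_smul_one_of_mul_transpose hcard hrows) j k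

theorem sum_erase_sq_sum_le (hsign : ∀ i j, w i j = 1 ∨ w i j = -1)
    (horth : ∀ i i', i ≠ i' → ∑ j, w i j * w i' j = 0) {i₀ : ι} (hone : ∀ j, w i₀ j = 1)
    (S : Finset ι) :
    ∑ i ∈ univ.erase i₀, (∑ j ∈ S, w i j) ^ 2
      ≤ Fintype.card ι * min (#S : ℝ) (Fintype.card ι - #S) := by
  have hcol := sum_mul_eq_ite_of_orthogonal_rows hsign horth
  have hcompl : ∀ i ∈ univ.erase i₀, (∑ j ∈ S, w i j) ^ 2 = (∑ j ∈ Sᶜ, w i j) ^ 2 := by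
    intro i hi
    have := sum_compl_add_sum S (w i)
    rw [sum_eq_zero_of_orthogonal_ones hone horth (ne_of_mem_erase hi)] at this
    rw [eq_neg_of_add_eq_zero_right this, neg_sq]
  rw [mul_min_of_nonneg _ _ (Nat.cast_nonneg _)]
  refine le_min ?_ ?_
  · rw [← sum_sq_sum_eq_mul_card hcol S]
    exact sum_le_sum_of_subset_of_nonneg (erase_subset _ _) fun i _ _ => sq_nonneg _
  · have hSc := sum_sq_sum_eq_mul_card hcol Sᶜ
    rw [card_compl, Nat.cast_sub (card_le_univ S)] at hSc
    rw [sum_congr rfl hcompl, ← hSc]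
    exact sum_le_sum_of_subset_of_nonneg (erase_subset _ _) fun i _ _ => sq_nonneg _

theorem sum_abs_sum_le (hsign : ∀ i j, w i j = 1 ∨ w i j = -1)
    (horth : ∀ i i', i ≠ i' → ∑ j, w i j * w i' j = 0) {i₀ : ι} (hone : ∀ j, w i₀ j = 1)
    (S : Finset ι) :
    ∑ i, |∑ j ∈ S, w i j|
      ≤ Fintype.card ι * (1 + √(min (#S : ℝ) (Fintype.card ι - #S))) := by
  have hS : (#S : ℝ) ≤ Fintype.card ι := by exact_mod_cast card_le_univ S
  have hcard : (#(univ.erase i₀) : ℝ) ≤ Fintype.card ι := by exact_mod_cast card_le_univ _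
  set N : ℝ := (Fintype.card ι : ℝ)
  set m : ℝ := min (#S : ℝ) (N - #S)
  have hm : 0 ≤ m := le_min (Nat.cast_nonneg _) (sub_nonneg.mpr hS)
  have hfirst : |∑ j ∈ S, w i₀ j| = #S := by simp [hone]
  have hrest : ∑ i ∈ univ.erase i₀, |∑ j ∈ S, w i j| ≤ N * √m := by
    have hcs := sq_sum_le_card_mul_sum_sq (s := univ.erase i₀) (f := fun i => |∑ j ∈ S, w i j|)
    simp only [sq_abs] at hcs
    refine (pow_le_pow_iff_left₀ (sum_nonneg fun i _ => abs_nonneg _) (by positivity)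
      two_ne_zero).mp ?_
    calc (∑ i ∈ univ.erase i₀, |∑ j ∈ S, w i j|) ^ 2
        ≤ #(univ.erase i₀) * ∑ i ∈ univ.erase i₀, (∑ j ∈ S, w i j) ^ 2 := hcs
      _ ≤ N * (N * m) :=
        mul_le_mul hcard (sum_erase_sq_sum_le hsign horth hone S)
          (sum_nonneg fun i _ => sq_nonneg _) (Nat.cast_nonneg _)
      _ = (N * √m) ^ 2 := by rw [mul_pow, Real.sq_sqrt hm]; ring
  rw [← add_sum_erase _ _ (mem_univ i₀), hfirst, mul_add, mul_one]
  linarith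

end SignMatrix

section Estimator

variable {n : ℕ} (v : Fin n → Fin n → ℝ)

noncomputable def posSetDiff (f : Finset (Fin n) → ℝ) (i : Fin n) : ℝ :=
  f (posSet v i) - f (univ \ posSet v i)

noncomputable def hadamardEstimate (f : Finset (Fin n) → ℝ) (S : Finset (Fin n)) : ℝ :=
  f ∅ + ∑ j ∈ S, (1 / n) * ∑ i, v i j * posSetDiff v f i

theorem hadamardEstimate_sub (f g : Finset (Fin n) → ℝ) (S : Finset (Fin n)) :
    hadamardEstimate v (f - g) S = hadamardEstimate v f S - hadamardEstimate v g S := by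
  simp only [hadamardEstimate, posSetDiff, Pi.sub_apply, mul_sub, sum_sub_distrib]
  ring

variable {v}

theorem posSetDiff_of_linear (hsign : ∀ i j, v i j = 1 ∨ v i j = -1)
    {g : Finset (Fin n) → ℝ} {c₀ : ℝ} {c : Fin n → ℝ} (hg : ∀ S, g S = c₀ + ∑ k ∈ S, c k)
    (i : Fin n) : posSetDiff v g i = ∑ k, v i k * c k := by
  have hpos : ∀ k ∈ univ.filter (fun k => v i k = 1), v i k * c k = c k := fun k hk => by
    rw [(mem_filter.mp hk).2, one_mul]
  have hneg : ∀ k ∈ univ.filter (fun k => ¬v i k = 1), v i k * c k = -c k := fun k hk => by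
    rw [((hsign i k).resolve_left (mem_filter.mp hk).2), neg_one_mul]
  rw [posSetDiff, hg, hg, ← sum_filter_add_sum_filter_not univ (fun k => v i k = 1),
    sum_congr rfl hpos, sum_congr rfl hneg, sum_neg_distrib, filter_not, posSet]
  ring

theorem hadamardEstimate_of_linear (hsign : ∀ i j, v i j = 1 ∨ v i j = -1)
    (horth : ∀ i i', i ≠ i' → ∑ j, v i j * v i' j = 0)
    {g : Finset (Fin n) → ℝ} {c₀ : ℝ} {c : Fin n → ℝ} (hg : ∀ S, g S = c₀ + ∑ k ∈ S, c k)
    (S : Finset (Fin n)) : hadamardEstimate v g S = g S := by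
  have hcoeff : ∀ j, (1 / n : ℝ) * ∑ i, v i j * posSetDiff v g i = c j := fun j => by
    have hn : (n : ℝ) ≠ 0 := by
      have := j.pos
      positivity
    have hsum : ∑ i, v i j * ∑ k, v i k * c k = n * c j := by
      simp_rw [mul_sum, ← mul_assoc]
      rw [sum_comm]
      simp_rw [← sum_mul, sum_mul_eq_ite_of_orthogonal_rows hsign horth, Fintype.card_fin]
      simp
    simp_rw [posSetDiff_of_linear hsign hg, hsum]
    field_simp
  simp only [hadamardEstimate, hcoeff, hg, sum_empty, add_zero]

theorem hadamardEstimate_sub_self (η : Finset (Fin n) → ℝ) (S : Finset (Fin n)) :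
    hadamardEstimate v η S - η S
      = η ∅ - η S + (1 / n) * ∑ i, (∑ j ∈ S, v i j) * posSetDiff v η i := by
  simp only [hadamardEstimate, ← mul_sum, sum_mul]
  rw [sum_comm]
  ring

theorem abs_posSetDiff_le {η : Finset (Fin n) → ℝ} {Δ : ℝ} (hη : ∀ T, |η T| ≤ Δ) (i : Fin n) :
    |posSetDiff v η i| ≤ 2 * Δ := by
  rw [posSetDiff, two_mul]
  exact (abs_sub _ _).trans (add_le_add (hη _) (hη _))

theorem abs_hadamardEstimate_sub_self_le (hsign : ∀ i j, v i j = 1 ∨ v i j = -1)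
    (horth : ∀ i i', i ≠ i' → ∑ j, v i j * v i' j = 0) {i₀ : Fin n} (hone : ∀ j, v i₀ j = 1)
    {η : Finset (Fin n) → ℝ} {Δ : ℝ} (hη : ∀ T, |η T| ≤ Δ) (S : Finset (Fin n)) :
    |hadamardEstimate v η S - η S| ≤ 4 * Δ * (1 + √(min (#S : ℝ) (n - #S))) := by
  set r := √(min (#S : ℝ) (n - #S))
  have hr : 0 ≤ r := Real.sqrt_nonneg _
  have hΔ : 0 ≤ Δ := (abs_nonneg _).trans (hη ∅)
  have hn : (0 : ℝ) < n := by exact_mod_cast i₀.pos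
  have hrows := sum_abs_sum_le hsign horth hone S
  rw [Fintype.card_fin] at hrows
  have hsum : |∑ i, (∑ j ∈ S, v i j) * posSetDiff v η i| ≤ 2 * Δ * (n * (1 + r)) :=
    calc |∑ i, (∑ j ∈ S, v i j) * posSetDiff v η i|
        ≤ ∑ i, |∑ j ∈ S, v i j| * |posSetDiff v η i| := by
          simpa only [abs_mul] using
            abs_sum_le_sum_abs (fun i => (∑ j ∈ S, v i j) * posSetDiff v η i) univ
      _ ≤ ∑ i, |∑ j ∈ S, v i j| * (2 * Δ) :=
          sum_le_sum fun i _ => mul_le_mul_of_nonneg_left (abs_posSetDiff_le hη i) (abs_nonneg _)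
      _ ≤ 2 * Δ * (n * (1 + r)) := by
          rw [← sum_mul, mul_comm]
          exact mul_le_mul_of_nonneg_left hrows (by positivity)
  have hquery : |(1 / n : ℝ) * ∑ i, (∑ j ∈ S, v i j) * posSetDiff v η i| ≤ 2 * Δ * (1 + r) :=
    calc _ ≤ (1 / n : ℝ) * (2 * Δ * (n * (1 + r))) := by
          rw [abs_mul, abs_of_pos (by positivity)]
          exact mul_le_mul_of_nonneg_left hsum (by positivity)
      _ = 2 * Δ * (1 + r) := by field_simp
  have hvalues : |η ∅ - η S| ≤ 2 * Δ := by
    rw [two_mul]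
    exact (abs_sub _ _).trans (add_le_add (hη _) (hη _))
  rw [hadamardEstimate_sub_self]
  calc _ ≤ |η ∅ - η S| + |(1 / n : ℝ) * ∑ i, (∑ j ∈ S, v i j) * posSetDiff v η i| :=
        abs_add_le _ _
    _ ≤ 2 * Δ + 2 * Δ * (1 + r) := add_le_add hvalues hquery
    _ ≤ 4 * Δ * (1 + r) := by nlinarith [mul_nonneg hΔ hr]

end Estimator

/-- The Hadamard-based learning algorithm: for some universal constant `C > 0`, given a
Hadamard basis `v₁, …, vₙ` with `v₁` the all-ones vector and a Δ-linear function `f`, the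
linear function `h(S) = f(∅) + ∑_{j∈S} hⱼ` with
`hⱼ = (1/n) ∑ᵢ vᵢ(j)(f(Sᵢ) − f(U∖Sᵢ))` satisfies
`|h(S) − f(S)| ≤ CΔ(1 + √(min(|S|, n−|S|)))` for every set `S`. -/
theorem hadamard_learning :
    ∃ C : ℝ, 0 < C ∧
      ∀ (n : ℕ) (hn : 0 < n) (v : Fin n → Fin n → ℝ),
        (∀ i j : Fin n, v i j = 1 ∨ v i j = -1) →
        (∀ i i' : Fin n, i ≠ i' → ∑ j : Fin n, v i j * v i' j = 0) →
        (∀ j : Fin n, v ⟨0, hn⟩ j = 1) →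
        ∀ (Δ : ℝ), 0 ≤ Δ →
        ∀ f : Finset (Fin n) → ℝ, IsCloseLinear f Δ →
        ∀ S : Finset (Fin n),
          |(f ∅ + ∑ j ∈ S, (1 / n) * ∑ i : Fin n,
              v i j * (f (posSet v i) - f (Finset.univ \ posSet v i))) - f S|
            ≤ C * Δ * (1 + Real.sqrt (min S.card (n - S.card))) := by
  refine ⟨4, by norm_num, fun n hn v hsign horth hone Δ _ f hf S => ?_⟩
  obtain ⟨g, ⟨c₀, c, hg⟩, hfg⟩ := hf
  have hf_sub_g : hadamardEstimate v f S - f S = hadamardEstimate v (f - g) S - (f - g) S := by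
    rw [hadamardEstimate_sub, hadamardEstimate_of_linear hsign horth hg, Pi.sub_apply]
    ring
  change |hadamardEstimate v f S - f S| ≤ _
  rw [hf_sub_g]
  exact abs_hadamardEstimate_sub_self_le hsign horth hone hfg S
end
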